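/- arXiv:1712.05218 — 8 statements merged into one kernel-verified Lean document; each statement's English description precedes it below -/
import Mathlib

section
/- Let V be a finite set and τ : V → ℕ with τ(v) ≥ 1 for all v. If J : ℕ≥1 → Finset V is a feasible schedule for τ, then the schedule J' defined by J'(k) = J(2k−1) ∪ J(2k) for k ≥ 1 is a feasible schedule for the turnover times τ'(v) = ⌈τ(v)/2⌉. -/
/-- A schedule `J` (day `k ≥ 1` visits the set `J k`) is feasible for turnover times `τ`:
every client `v` is visited at least once in every window of `τ v` consecutive days. -/
def Feasible {V : Type*} (τ : V → ℕ) (J : ℕ → Finset V) : Prop :=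
  ∀ v : V, ∀ t : ℕ, ∃ k : ℕ, t < k ∧ k ≤ t + τ v ∧ v ∈ J k

/-!
Merging every block of `c` consecutive days into a single day turns a window of `c * t` old days
into `t` new days, so a client that had to be visited every `τ v` old days now has to be visited
every `⌈τ v / c⌉` new days: the old visit day `m` lies in the new day `⌈m / c⌉`.
-/

def mergeDays {V : Type*} [DecidableEq V] (c : ℕ) (J : ℕ → Finset V) (k : ℕ) : Finset V :=
  (Finset.range c).biUnion fun i => J (c * k - i)

theorem mergeDays_two {V : Type*} [DecidableEq V] (J : ℕ → Finset V) (k : ℕ) :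
    mergeDays 2 J k = J (2 * k - 1) ∪ J (2 * k) := by
  simp [mergeDays, Finset.range_add_one, Finset.union_comm]

namespace Feasible

variable {V : Type*} {τ : V → ℕ} {J : ℕ → Finset V}

theorem mergeDays [DecidableEq V] {c : ℕ} (hc : 0 < c) (hJ : Feasible τ J) :
    Feasible (fun v => (τ v + c - 1) / c) (_root_.mergeDays c J) := by
  intro v t
  obtain ⟨m, htm, hmt, hvm⟩ := hJ v (c * t)
  set k := (m + c - 1) / c
  have hdiv : c * k + (m + c - 1) % c = m + c - 1 := Nat.div_add_mod _ _
  have hmod := Nat.mod_lt (m + c - 1) hc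
  have hmk : m ≤ c * k := by omega
  have hkm : c * k - m < c := by omega
  refine ⟨k, Nat.lt_of_mul_lt_mul_left (htm.trans_le hmk), ?_, ?_⟩
  · calc k ≤ (τ v + c - 1 + t * c) / c := Nat.div_le_div_right (by rw [Nat.mul_comm t]; omega)
      _ = t + (τ v + c - 1) / c := by rw [Nat.add_mul_div_right _ _ hc, Nat.add_comm]
  · exact Finset.mem_biUnion.2 ⟨c * k - m, Finset.mem_range.2 hkm, by rwa [Nat.sub_sub_self hmk]⟩

end Feasible

theorem doubling_schedule_feasible_general {V : Type*} [DecidableEq V]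
    (τ : V → ℕ) (J : ℕ → Finset V) (hJ : Feasible τ J) :
    Feasible (fun v => (τ v + 1) / 2) (fun k => J (2 * k - 1) ∪ J (2 * k)) := by
  rw [← funext (mergeDays_two J)]
  exact hJ.mergeDays two_pos

/-- Concatenating days pairwise: if `J` is feasible for `τ`, then
`J' k = J (2k-1) ∪ J (2k)` is feasible for the turnover times `⌈τ v / 2⌉`. -/
theorem doubling_schedule_feasible {V : Type*} [Fintype V] [DecidableEq V]
    (τ : V → ℕ) (hτ : ∀ v, 1 ≤ τ v) (J : ℕ → Finset V) (hJ : Feasible τ J) :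
    Feasible (fun v => (τ v + 1) / 2) (fun k => J (2 * k - 1) ∪ J (2 * k)) :=
  doubling_schedule_feasible_general τ J hJ
end

section
/- Let (X,d) be a metric space with depot s ∈ X, let V ⊆ X be a finite set of clients, and let τ : V → ℕ with τ(v) ≥ 1. Define τ'(v) = 2^⌊log₂ τ(v)⌋ (τ rounded down to a power of 2). Then the min-max value of the instance (V,τ') is at most 2 times the min-max value of the instance (V,τ). -/
open scoped BigOperators

/-- A schedule on the client set `V` (day `k ≥ 1` visits `J k ⊆ V`) is feasible for
turnover times `τ`: every client `v ∈ V` is visited in every window of `τ v` days. -/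
def FeasibleOn {X : Type*} (V : Finset X) (τ : X → ℕ) (J : ℕ → Finset X) : Prop :=
  (∀ k : ℕ, J k ⊆ V) ∧ ∀ v ∈ V, ∀ t : ℕ, ∃ k : ℕ, t < k ∧ k ≤ t + τ v ∧ v ∈ J k

/-- The cost of the route `s, v₁, …, v_r, s` where `l = [v₁, …, v_r]`. -/
def routeLen {X : Type*} (d : X → X → ℝ) (s : X) (l : List X) : ℝ :=
  (List.zip (s :: l) (l ++ [s])).foldr (fun p acc => d p.1 p.2 + acc) 0

/-- The tour cost of a finite set `S`: the minimum over all orderings `v₁,…,v_r` of the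
elements of `S` of `d s v₁ + ∑ d vᵢ vᵢ₊₁ + d v_r s`, with `c ∅ = 0`. -/
noncomputable def tourCost {X : Type*} [DecidableEq X] (d : X → X → ℝ) (s : X)
    (S : Finset X) : ℝ :=
  if S = ∅ then 0
  else sInf {x : ℝ | ∃ l : List X, l.Nodup ∧ l.toFinset = S ∧ x = routeLen d s l}

/-- The min-max value of the instance `(V, τ)` in a metric space with depot `s`:
the infimum over feasible schedules `J` of `sup_k c(J k)` (expressed as the infimum
over all upper bounds on the daily tour costs of feasible schedules). -/
noncomputable def minMaxVal {X : Type*} [MetricSpace X] [DecidableEq X] (s : X)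
    (V : Finset X) (τ : X → ℕ) : ℝ :=
  sInf {B : ℝ | ∃ J : ℕ → Finset X, FeasibleOn V τ J ∧
    ∀ k : ℕ, tourCost dist s (J k) ≤ B}

/-! Merging days `2k - 1` and `2k` of a schedule feasible for `τ` yields a schedule feasible
for every `σ` with `τ ≤ 2σ`, in particular for `σ v = 2 ^ ⌊log₂ τ v⌋`. By the triangle
inequality, concatenating two tours costs at most the sum of their costs, so each merged day
costs at most twice the bound of the original schedule. -/

def pathLen {X : Type*} (d : X → X → ℝ) (a b : X) : List X → ℝ
  | [] => d a b
  | x :: l => d a x + pathLen d x b l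

lemma routeLen_eq_pathLen {X : Type*} (d : X → X → ℝ) (s : X) (l : List X) :
    routeLen d s l = pathLen d s s l := by
  suffices h : ∀ a : X,
      (List.zip (a :: l) (l ++ [s])).foldr (fun p acc => d p.1 p.2 + acc) 0 = pathLen d a s l from
    h s
  induction l with
  | nil => simp [pathLen]
  | cons x t ih => simp [pathLen, ih x]

section Metric

variable {X : Type*} [MetricSpace X]

lemma pathLen_nonneg (a b : X) (l : List X) : 0 ≤ pathLen dist a b l := by
  induction l generalizing a with
  | nil => exact dist_nonneg
  | cons x t ih => exact add_nonneg dist_nonneg (ih x)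

lemma routeLen_nonneg (s : X) (l : List X) : 0 ≤ routeLen dist s l := by
  rw [routeLen_eq_pathLen]
  exact pathLen_nonneg s s l

lemma pathLen_le_dist_add (a b x : X) (l : List X) :
    pathLen dist a b l ≤ dist a x + pathLen dist x b l := by
  cases l with
  | nil => exact dist_triangle a x b
  | cons y t =>
    simp only [pathLen, ← add_assoc]
    exact add_le_add_left (dist_triangle a x y) _

lemma pathLen_le_add_dist (a b c : X) (l : List X) :
    pathLen dist a b l ≤ pathLen dist a c l + dist c b := by
  induction l generalizing a with
  | nil => exact dist_triangle a c b
  | cons x t ih => simpa [pathLen, add_assoc] using add_le_add_right (ih x) (dist a x)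

lemma pathLen_le_of_sublist {l l' : List X} (h : l'.Sublist l) (a b : X) :
    pathLen dist a b l' ≤ pathLen dist a b l := by
  induction h generalizing a with
  | slnil => exact le_rfl
  | cons x _ ih => exact (ih a).trans (pathLen_le_dist_add a b x _)
  | cons_cons x _ ih => exact add_le_add_right (ih x) (dist a x)

lemma pathLen_append_cons (a b x : X) (l₁ l₂ : List X) :
    pathLen dist a b (l₁ ++ x :: l₂) = pathLen dist a x l₁ + pathLen dist x b l₂ := by
  induction l₁ generalizing a with
  | nil => simp [pathLen]
  | cons y t ih => simp [pathLen, ih y, add_assoc]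

lemma routeLen_le_of_sublist (s : X) {l l' : List X} (h : l'.Sublist l) :
    routeLen dist s l' ≤ routeLen dist s l := by
  rw [routeLen_eq_pathLen, routeLen_eq_pathLen]
  exact pathLen_le_of_sublist h s s

lemma routeLen_append_le (s : X) (l₁ l₂ : List X) :
    routeLen dist s (l₁ ++ l₂) ≤ routeLen dist s l₁ + routeLen dist s l₂ := by
  simp only [routeLen_eq_pathLen]
  cases l₂ with
  | nil => simp [pathLen]
  | cons x t =>
    rw [pathLen_append_cons, pathLen, ← add_assoc]
    exact add_le_add_left (pathLen_le_add_dist s x s l₁) _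

variable [DecidableEq X]

lemma tourCost_le_routeLen (s : X) {S : Finset X} {l : List X} (hl : l.toFinset = S) :
    tourCost dist s S ≤ routeLen dist s l := by
  unfold tourCost
  split_ifs
  · exact routeLen_nonneg s l
  · have hbdd : BddBelow
        {x : ℝ | ∃ l : List X, l.Nodup ∧ l.toFinset = S ∧ x = routeLen dist s l} :=
      ⟨0, by rintro _ ⟨l, -, -, rfl⟩; exact routeLen_nonneg s l⟩
    exact (csInf_le hbdd ⟨l.dedup, l.nodup_dedup, by ext; simp [← hl], rfl⟩).trans
      (routeLen_le_of_sublist s l.dedup_sublist)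

/-- Only finitely many orderings of `S` compete, so the infimum defining `tourCost` is attained. -/
lemma exists_routeLen_eq_tourCost (s : X) (S : Finset X) :
    ∃ l : List X, l.toFinset = S ∧ routeLen dist s l = tourCost dist s S := by
  unfold tourCost
  split_ifs with hS
  · exact ⟨[], by simp [hS], by simp [routeLen]⟩
  · have hfin : {x : ℝ | ∃ l : List X, l.Nodup ∧ l.toFinset = S ∧ x = routeLen dist s l}.Finite :=
      ((S.toList.permutations.toFinset : Set (List X)).toFinite.image (routeLen dist s)).subset <| by
          rintro x ⟨l, hnd, hlS, rfl⟩
          refine ⟨l, ?_, rfl⟩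
          simpa using List.perm_of_nodup_nodup_toFinset_eq hnd S.nodup_toList (by simpa)
    have hne : {x : ℝ | ∃ l : List X, l.Nodup ∧ l.toFinset = S ∧ x = routeLen dist s l}.Nonempty :=
      ⟨_, S.toList, S.nodup_toList, S.toList_toFinset, rfl⟩
    obtain ⟨l, -, hlS, hx⟩ := hne.csInf_mem hfin
    exact ⟨l, hlS, hx.symm⟩

lemma tourCost_nonneg (s : X) (S : Finset X) : 0 ≤ tourCost dist s S := by
  obtain ⟨l, -, hl⟩ := exists_routeLen_eq_tourCost s S
  exact hl ▸ routeLen_nonneg s l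

lemma tourCost_union_le (s : X) (A B : Finset X) :
    tourCost dist s (A ∪ B) ≤ tourCost dist s A + tourCost dist s B := by
  obtain ⟨la, rfl, hla⟩ := exists_routeLen_eq_tourCost s A
  obtain ⟨lb, rfl, hlb⟩ := exists_routeLen_eq_tourCost s B
  calc tourCost dist s (la.toFinset ∪ lb.toFinset)
      ≤ routeLen dist s (la ++ lb) := tourCost_le_routeLen s (List.toFinset_append ..)
    _ ≤ routeLen dist s la + routeLen dist s lb := routeLen_append_le s la lb
    _ = _ := by rw [hla, hlb]

end Metric

section Schedule

variable {X : Type*}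

def pairDays [DecidableEq X] (J : ℕ → Finset X) (k : ℕ) : Finset X :=
  J (2 * k - 1) ∪ J (2 * k)

lemma feasibleOn_const {V : Finset X} {τ : X → ℕ} (hτ : ∀ v ∈ V, 1 ≤ τ v) :
    FeasibleOn V τ fun _ => V :=
  ⟨fun _ => le_rfl, fun v hv t => ⟨t + 1, t.lt_succ_self, by have := hτ v hv; omega, hv⟩⟩

lemma FeasibleOn.pairDays [DecidableEq X] {V : Finset X} {τ σ : X → ℕ} {J : ℕ → Finset X}
    (hJ : FeasibleOn V τ J) (hστ : ∀ v ∈ V, τ v ≤ 2 * σ v) :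
    FeasibleOn V σ (pairDays J) := by
  refine ⟨fun k => Finset.union_subset (hJ.1 _) (hJ.1 _), fun v hv t => ?_⟩
  obtain ⟨m, htm, hmt, hmJ⟩ := hJ.2 v hv (2 * t)
  have := hστ v hv
  refine ⟨(m + 1) / 2, by omega, by omega, ?_⟩
  have hm : m = 2 * ((m + 1) / 2) - 1 ∨ m = 2 * ((m + 1) / 2) := by omega
  rcases hm with h | h
  · exact Finset.mem_union_left _ (h ▸ hmJ)
  · exact Finset.mem_union_right _ (h ▸ hmJ)

variable [MetricSpace X] [DecidableEq X]

lemma tourCost_pairDays_le (s : X) {J : ℕ → Finset X} {B : ℝ}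
    (hJ : ∀ k, tourCost dist s (J k) ≤ B) (k : ℕ) :
    tourCost dist s (pairDays J k) ≤ 2 * B := by
  calc tourCost dist s (pairDays J k)
      ≤ tourCost dist s (J (2 * k - 1)) + tourCost dist s (J (2 * k)) := tourCost_union_le s _ _
    _ ≤ 2 * B := by linarith [hJ (2 * k - 1), hJ (2 * k)]

lemma minMaxVal_le {s : X} {V : Finset X} {τ : X → ℕ} {J : ℕ → Finset X} {B : ℝ}
    (hJ : FeasibleOn V τ J) (hB : ∀ k, tourCost dist s (J k) ≤ B) : minMaxVal s V τ ≤ B :=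
  csInf_le ⟨0, by rintro _ ⟨J', -, hJ'⟩; exact (tourCost_nonneg s (J' 0)).trans (hJ' 0)⟩ ⟨J, hJ, hB⟩

lemma minMaxVal_le_two_mul_of_le_two_mul (s : X) {V : Finset X} {τ σ : X → ℕ}
    (hτ : ∀ v ∈ V, 1 ≤ τ v) (hστ : ∀ v ∈ V, τ v ≤ 2 * σ v) :
    minMaxVal s V σ ≤ 2 * minMaxVal s V τ := by
  rw [← div_le_iff₀' two_pos]
  refine le_csInf ⟨_, _, feasibleOn_const hτ, fun _ => le_rfl⟩ ?_
  rintro B ⟨J, hJ, hJB⟩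
  rw [div_le_iff₀' two_pos]
  exact minMaxVal_le (hJ.pairDays hστ) (tourCost_pairDays_le s hJB)

end Schedule

/-- Rounding the turnover times down to powers of 2 at most doubles the min-max value. -/
theorem minMax_rounding_powers_of_two {X : Type*} [MetricSpace X] [DecidableEq X]
    (s : X) (V : Finset X) (τ : X → ℕ) (hτ : ∀ v ∈ V, 1 ≤ τ v) :
    minMaxVal s V (fun v => 2 ^ Nat.log 2 (τ v)) ≤ 2 * minMaxVal s V τ :=
  minMaxVal_le_two_mul_of_le_two_mul s hτ fun v _ => by
    simpa [pow_succ, mul_comm] using (Nat.lt_pow_succ_log_self one_lt_two (τ v)).le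
end

section
/- Let G be a finite tree with nonnegative edge weights, let s be a vertex of G, and let d_G be the induced shortest-path (weighted tree) metric on the vertices. Then for every finite set S of vertices of G, the tour cost c(S) with respect to d_G and depot s equals 2 times the total edge weight of the minimal subtree of G containing {s} ∪ S (the union of the paths in G from s to the vertices of S). -/
open scoped BigOperators

/-- The unique path between `u` and `v` in a tree, as a walk. -/
noncomputable def treePath {α : Type*} {G : SimpleGraph α} (hG : G.IsTree) (u v : α) :
    G.Walk u v :=
  (hG.existsUnique_path u v).exists.choose

/-- The weighted shortest-path (tree) metric: the total weight of the unique path. -/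
noncomputable def treeDist {α : Type*} {G : SimpleGraph α} (hG : G.IsTree)
    (w : Sym2 α → ℝ) (u v : α) : ℝ :=
  ((treePath hG u v).edges.map w).sum

/-!
Call a vertex `x` *beyond* an edge `e` if `e` lies on the path from the depot `s` to `x`. An edge
lies on the path between `x` and `y` exactly when it separates them, i.e. when exactly one of them
is beyond it; so the length of a closed route through `s` is `∑ₑ cₑ · w e`, where `cₑ` counts how
often the route changes side of `e`. A closed route changes side an even number of times, and at
least once if it visits a vertex beyond `e`, so `cₑ ≥ 2` on every edge of the subtree. Conversely,
visiting `S` in depth-first order (lexicographic in the vertex sequence of the path from `s`) keeps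
the vertices beyond each edge consecutive, so that `cₑ ≤ 2`.
-/

section

open SimpleGraph

variable {α : Type*}

theorem List.cons_le_cons_iff_lex {β : Type*} [LinearOrder β] {a b : β} {l m : List β} :
    a :: l ≤ b :: m ↔ a < b ∨ a = b ∧ l ≤ m := by
  rw [le_iff_lt_or_eq, le_iff_lt_or_eq]
  change List.Lex _ _ _ ∨ _ ↔ _ ∨ _ ∧ (List.Lex _ _ _ ∨ _)
  constructor
  · rintro (h | h)
    · cases h with
      | cons h => exact .inr ⟨rfl, .inl h⟩
      | rel h => exact .inl h
    · simp_all
  · rintro (h | ⟨rfl, h | rfl⟩)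
    · exact .inl (.rel h)
    · exact .inl (.cons h)
    · exact .inr rfl

theorem List.IsPrefix.of_le_of_le {β : Type*} [LinearOrder β] {P A B C : List β}
    (hA : P <+: A) (hC : P <+: C) (hAB : A ≤ B) (hBC : B ≤ C) : P <+: B := by
  induction P generalizing A B C with
  | nil => exact List.nil_prefix
  | cons p P ih =>
    obtain ⟨A, rfl⟩ := hA
    obtain ⟨C, rfl⟩ := hC
    cases B with
    | nil => exact absurd hAB (not_le.2 (List.Lex.nil : List.Lex (· < ·) [] _))
    | cons q B =>
      simp only [List.cons_append, List.cons_le_cons_iff_lex] at hAB hBC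
      obtain ⟨rfl, hAB'⟩ : p = q ∧ P ++ A ≤ B := by
        rcases hAB with hpq | hAB
        · rcases hBC with hqp | ⟨rfl, -⟩ <;> exact absurd hpq (by order)
        · exact hAB
      have hBC' : B ≤ P ++ C := by simpa using hBC
      exact List.cons_prefix_cons.2
        ⟨rfl, ih (List.prefix_append _ _) (List.prefix_append _ _) hAB' hBC'⟩

def chainSum (d : α → α → ℝ) : List α → ℝ
  | a :: b :: l => d a b + chainSum d (b :: l)
  | _ => 0

def crossCount (φ : α → Prop) [DecidablePred φ] : List α → ℕ
  | a :: b :: l => (if φ a ↔ φ b then 0 else 1) + crossCount φ (b :: l)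
  | _ => 0

theorem routeLen_eq_chainSum (d : α → α → ℝ) (s : α) (l : List α) :
    routeLen d s l = chainSum d (s :: (l ++ [s])) := by
  suffices ∀ a, ((a :: l).zip (l ++ [s])).foldr (fun p acc => d p.1 p.2 + acc) 0 =
      chainSum d (a :: (l ++ [s])) from this s
  induction l with
  | nil => simp [chainSum]
  | cons x l ih => intro a; simp [chainSum, ih]

section crossCount

variable (φ : α → Prop) [DecidablePred φ]

theorem crossCount_eq_zero {l : List α} (h : ∀ x ∈ l, ¬φ x) : crossCount φ l = 0 := by
  induction l with
  | nil => rfl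
  | cons a l ih =>
    cases l with
    | nil => rfl
    | cons b l =>
      simp only [List.mem_cons, forall_eq_or_imp] at h ih
      simp [crossCount, h.1, h.2.1, ih h.2]

theorem one_le_crossCount {a x : α} {l : List α} (hx : x ∈ l) (h : ¬(φ x ↔ φ a)) :
    1 ≤ crossCount φ (a :: l) := by
  induction l generalizing a with
  | nil => simp at hx
  | cons b l ih =>
    rw [crossCount]
    by_cases hab : φ a ↔ φ b
    · rcases List.mem_cons.1 hx with rfl | hx
      · exact absurd hab.symm h
      · have := ih (a := b) hx (by tauto)
        omega
    · simp [hab]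

theorem even_crossCount_iff (a b : α) (l : List α) :
    Even (crossCount φ (a :: (l ++ [b]))) ↔ (φ a ↔ φ b) := by
  induction l generalizing a with
  | nil => by_cases φ a <;> by_cases φ b <;> simp_all [crossCount]
  | cons x l ih =>
    rw [List.cons_append, crossCount, add_comm]
    by_cases hax : φ a ↔ φ x
    · simp [hax, ih]
    · simp only [hax, if_false, Nat.even_add_one, ih]
      tauto

theorem two_le_crossCount {s x : α} {l : List α} (hs : ¬φ s) (hx : x ∈ l) (hφx : φ x) :
    2 ≤ crossCount φ (s :: (l ++ [s])) := by
  have heven := (even_crossCount_iff φ s s l).2 Iff.rfl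
  have hpos := one_le_crossCount φ (List.mem_append_left [s] hx) (by tauto)
  obtain ⟨k, hk⟩ := heven
  omega

-- The sharper bound when the chain starts inside the block is what makes the induction work.
theorem crossCount_le_of_contiguous {b : α} (hb : ¬φ b) (a : α) (l : List α)
    (hl : ∀ x y z, [x, y, z].Sublist (a :: l) → φ x → φ z → φ y) :
    crossCount φ (a :: (l ++ [b])) ≤ if φ a then 1 else 2 := by
  induction l generalizing a with
  | nil => by_cases φ a <;> simp_all [crossCount]
  | cons c l ih =>
    have ihc := ih c fun x y z h => hl x y z (h.cons a)
    rw [List.cons_append, crossCount]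
    by_cases ha : φ a <;> by_cases hc : φ c <;> simp only [ha, hc, if_true, if_false] at ihc ⊢
    · simpa using ihc
    · have hrest : ∀ x ∈ c :: (l ++ [b]), ¬φ x := by
        intro x hx hφx
        rcases List.mem_cons.1 hx with rfl | hx
        · exact hc hφx
        rcases List.mem_append.1 hx with hx | hx
        · exact hc (hl a c x (by simpa using hx) ha hφx)
        · exact hb (List.mem_singleton.1 hx ▸ hφx)
      simp [crossCount_eq_zero φ hrest]
    · simp only [iff_true, if_false]
      omega
    · simpa using ihc

end crossCount

section treePath

variable {G : SimpleGraph α} (hG : G.IsTree)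

theorem treePath_isPath (u v : α) : (treePath hG u v).IsPath :=
  (hG.existsUnique_path u v).exists.choose_spec

theorem eq_treePath {u v : α} {p : G.Walk u v} (hp : p.IsPath) : p = treePath hG u v :=
  (hG.existsUnique_path u v).unique hp (treePath_isPath hG u v)

theorem treePath_self (u : α) : treePath hG u u = Walk.nil :=
  (eq_treePath hG .nil).symm

theorem takeUntil_treePath [DecidableEq α] {u v x : α} (hx : x ∈ (treePath hG u v).support) :
    (treePath hG u v).takeUntil x hx = treePath hG u x :=
  eq_treePath hG ((treePath_isPath hG u v).takeUntil hx)

theorem edges_treePath_of_adj (s : α) {u v : α} (h : G.Adj u v) :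
    (treePath hG s v).edges = (treePath hG s u).edges ++ [s(u, v)] ∨
      (treePath hG s u).edges = (treePath hG s v).edges ++ [s(u, v)] := by
  classical
  by_cases hv : v ∈ (treePath hG s u).support
  · right
    have hdrop : (treePath hG s u).dropUntil v hv = h.symm.toWalk :=
      (eq_treePath hG ((treePath_isPath hG s u).dropUntil hv)).trans
        (eq_treePath hG h.symm.isPath_toWalk).symm
    have hsplit := congrArg Walk.edges ((treePath hG s u).take_spec hv)
    rw [Walk.edges_append, hdrop, takeUntil_treePath, Adj.edges_toWalk, Sym2.eq_swap] at hsplit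
    exact hsplit.symm
  · left
    rw [← eq_treePath hG ((treePath_isPath hG s u).concat hv h), Walk.edges_concat,
      List.concat_eq_append]

def IsBeyond (s : α) (e : Sym2 α) (x : α) : Prop :=
  e ∈ (treePath hG s x).edges

noncomputable instance [DecidableEq α] (s : α) (e : Sym2 α) : DecidablePred (IsBeyond hG s e) :=
  fun x => inferInstanceAs (Decidable (e ∈ (treePath hG s x).edges))

theorem not_isBeyond_self (s : α) (e : Sym2 α) : ¬IsBeyond hG s e s := by
  simp [IsBeyond, treePath_self]

theorem isBeyond_iff_of_adj (s : α) {u v : α} (h : G.Adj u v) (e : Sym2 α) :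
    (IsBeyond hG s e u ↔ IsBeyond hG s e v) ↔ e ≠ s(u, v) := by
  have key : ∀ {x y : α}, (treePath hG s y).edges = (treePath hG s x).edges ++ [s(u, v)] →
      ((IsBeyond hG s e x ↔ IsBeyond hG s e y) ↔ e ≠ s(u, v)) := by
    intro x y hxy
    have hnew : s(u, v) ∉ (treePath hG s x).edges := by
      have := (treePath_isPath hG s y).isTrail.edges_nodup
      rw [hxy, List.nodup_append] at this
      exact fun h => this.2.2 _ h _ (List.mem_singleton_self _) rfl
    unfold IsBeyond
    rw [hxy, List.mem_append, List.mem_singleton]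
    by_cases he : e = s(u, v) <;> simp_all
  rcases edges_treePath_of_adj hG s h with h' | h'
  · exact key h'
  · exact Iff.comm.trans (key h')

theorem mem_edges_treePath_iff (s : α) {x y : α} (e : Sym2 α) :
    e ∈ (treePath hG x y).edges ↔ ¬(IsBeyond hG s e x ↔ IsBeyond hG s e y) := by
  suffices ∀ {x y : α} (p : G.Walk x y), p.IsPath →
      (e ∈ p.edges ↔ ¬(IsBeyond hG s e x ↔ IsBeyond hG s e y)) from
    this _ (treePath_isPath hG x y)
  intro x y p hp
  induction p with
  | nil => simp
  | @cons x z y h p ih =>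
    have hnd := hp.isTrail.edges_nodup
    rw [Walk.edges_cons, List.nodup_cons] at hnd
    have hstep := isBeyond_iff_of_adj hG s h e
    have hp' := ih hp.of_cons
    rw [Walk.edges_cons, List.mem_cons]
    by_cases he : e = s(x, z)
    · subst he
      tauto
    · tauto

theorem exists_mem_isBeyond (s : α) {e : Sym2 α} (he : e ∈ G.edgeSet) :
    ∃ c ∈ e, IsBeyond hG s e c := by
  induction e using Sym2.ind with
  | _ u v =>
  have hflip := (isBeyond_iff_of_adj hG s he s(u, v)).not.2 (by simp)
  by_cases hu : IsBeyond hG s s(u, v) u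
  · exact ⟨u, Sym2.mem_mk_left u v, hu⟩
  · exact ⟨v, Sym2.mem_mk_right u v, by tauto⟩

theorem isBeyond_iff_mem_support {s c x : α} {e : Sym2 α} (hce : c ∈ e)
    (hc : IsBeyond hG s e c) : IsBeyond hG s e x ↔ c ∈ (treePath hG s x).support := by
  classical
  refine ⟨fun hx => Walk.mem_support_of_mem_edges hx hce, fun hcx => ?_⟩
  rw [IsBeyond, ← takeUntil_treePath hG hcx] at hc
  exact Walk.edges_takeUntil_subset_edges _ hcx hc

theorem support_treePath_prefix_iff (s : α) {c x : α} :
    (treePath hG s c).support.IsPrefix (treePath hG s x).support ↔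
      c ∈ (treePath hG s x).support := by
  classical
  refine ⟨fun h => h.subset (Walk.end_mem_support _), fun hcx => ?_⟩
  rw [← takeUntil_treePath hG hcx]
  exact Walk.support_takeUntil_prefix_support _ hcx

theorem IsBeyond.of_support_le_of_le [LinearOrder α] {s x y z : α} {e : Sym2 α}
    (hx : IsBeyond hG s e x) (hz : IsBeyond hG s e z)
    (hxy : (treePath hG s x).support ≤ (treePath hG s y).support)
    (hyz : (treePath hG s y).support ≤ (treePath hG s z).support) : IsBeyond hG s e y := by
  obtain ⟨c, hce, hc⟩ := exists_mem_isBeyond hG s ((treePath hG s x).edges_subset_edgeSet hx)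
  simp only [isBeyond_iff_mem_support hG hce hc, ← support_treePath_prefix_iff] at hx hz ⊢
  exact hx.of_le_of_le hz hxy hyz

/-- Sorting lexicographically by the vertex sequence of the path from `s` gives a depth-first
order, in which the vertices beyond any edge are consecutive. -/
theorem exists_perm_isBeyond_contiguous (s : α) (L : List α) :
    ∃ l : List α, l.Perm L ∧ ∀ e x y z, [x, y, z].Sublist l →
      IsBeyond hG s e x → IsBeyond hG s e z → IsBeyond hG s e y := by
  let _ : LinearOrder α := IsWellOrder.linearOrder WellOrderingRel
  let key x := (treePath hG s x).support
  refine ⟨L.mergeSort fun x y => key x ≤ key y, List.mergeSort_perm _ _,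
    fun e x y z hxyz hx hz => ?_⟩
  have hsorted := List.pairwise_mergeSort (le := fun x y => key x ≤ key y)
    (fun a b c hab hbc => by simp_all; order) (fun a b => by simpa using le_total _ _) L
  replace hsorted := hsorted.sublist hxyz
  simp only [List.pairwise_cons, List.mem_cons, decide_eq_true_eq] at hsorted
  exact hx.of_support_le_of_le hG hz (hsorted.1 y (by simp)) (hsorted.2.1 z (by simp))

end treePath

section route

variable [DecidableEq α] {G : SimpleGraph α} (hG : G.IsTree) (w : Sym2 α → ℝ)

noncomputable def subtreeEdges (s : α) (S : Finset α) : Finset (Sym2 α) :=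
  S.biUnion fun v => (treePath hG s v).edges.toFinset

theorem mem_subtreeEdges {s : α} {S : Finset α} {e : Sym2 α} :
    e ∈ subtreeEdges hG s S ↔ ∃ x ∈ S, IsBeyond hG s e x := by
  simp [subtreeEdges, IsBeyond]

theorem treeDist_eq_sum_ite {s x y : α} {E : Finset (Sym2 α)}
    (hx : ∀ e, IsBeyond hG s e x → e ∈ E) (hy : ∀ e, IsBeyond hG s e y → e ∈ E) :
    treeDist hG w x y =
      ∑ e ∈ E, if IsBeyond hG s e x ↔ IsBeyond hG s e y then 0 else w e := by
  have hedges : (treePath hG x y).edges.toFinset =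
      E.filter fun e => ¬(IsBeyond hG s e x ↔ IsBeyond hG s e y) := by
    ext e
    rw [List.mem_toFinset, Finset.mem_filter, mem_edges_treePath_iff hG s]
    refine ⟨fun h => ⟨?_, h⟩, And.right⟩
    by_cases hex : IsBeyond hG s e x
    · exact hx e hex
    · exact hy e (by tauto)
  rw [treeDist, ← List.sum_toFinset _ (treePath_isPath hG x y).isTrail.edges_nodup, hedges,
    Finset.sum_filter]
  simp only [ite_not]

theorem chainSum_treeDist_eq_sum_crossCount {s : α} {E : Finset (Sym2 α)} {L : List α}
    (hL : ∀ x ∈ L, ∀ e, IsBeyond hG s e x → e ∈ E) :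
    chainSum (treeDist hG w) L = ∑ e ∈ E, (crossCount (IsBeyond hG s e) L : ℝ) * w e := by
  induction L with
  | nil => simp [chainSum, crossCount]
  | cons a L ih =>
    cases L with
    | nil => simp [chainSum, crossCount]
    | cons b L =>
      rw [chainSum, treeDist_eq_sum_ite hG w (hL a (by simp)) (hL b (by simp)),
        ih fun x hx => hL x (List.mem_cons_of_mem a hx), ← Finset.sum_add_distrib]
      refine Finset.sum_congr rfl fun e _ => ?_
      rw [crossCount]
      push_cast
      split_ifs <;> ring

theorem routeLen_treeDist_eq_sum_crossCount {s : α} {S : Finset α} {l : List α}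
    (hl : ∀ x ∈ l, x ∈ S) :
    routeLen (treeDist hG w) s l =
      ∑ e ∈ subtreeEdges hG s S, (crossCount (IsBeyond hG s e) (s :: (l ++ [s])) : ℝ) * w e := by
  rw [routeLen_eq_chainSum]
  refine chainSum_treeDist_eq_sum_crossCount hG w fun x hx e he => ?_
  obtain rfl | hx : x = s ∨ x ∈ l := by simpa [or_comm] using hx
  · exact absurd he (not_isBeyond_self hG x e)
  · exact (mem_subtreeEdges hG).2 ⟨x, hl x hx, he⟩

theorem two_mul_sum_le_routeLen (hw : ∀ e ∈ G.edgeSet, 0 ≤ w e) (s : α) {S : Finset α}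
    {l : List α} (hl : l.toFinset = S) :
    2 * ∑ e ∈ subtreeEdges hG s S, w e ≤ routeLen (treeDist hG w) s l := by
  rw [routeLen_treeDist_eq_sum_crossCount hG w fun x hx => hl ▸ List.mem_toFinset.2 hx,
    Finset.mul_sum]
  refine Finset.sum_le_sum fun e he => ?_
  obtain ⟨x, hxS, hx⟩ := (mem_subtreeEdges hG).1 he
  have hcross := two_le_crossCount _ (not_isBeyond_self hG s e)
    (List.mem_toFinset.1 (hl ▸ hxS)) hx
  exact mul_le_mul_of_nonneg_right (by exact_mod_cast hcross)
    (hw e ((treePath hG s x).edges_subset_edgeSet hx))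

theorem routeLen_le_two_mul_sum (hw : ∀ e ∈ G.edgeSet, 0 ≤ w e) (s : α) {S : Finset α}
    {l : List α} (hl : ∀ x ∈ l, x ∈ S)
    (hcontig : ∀ e x y z, [x, y, z].Sublist l →
      IsBeyond hG s e x → IsBeyond hG s e z → IsBeyond hG s e y) :
    routeLen (treeDist hG w) s l ≤ 2 * ∑ e ∈ subtreeEdges hG s S, w e := by
  rw [routeLen_treeDist_eq_sum_crossCount hG w hl, Finset.mul_sum]
  refine Finset.sum_le_sum fun e he => ?_
  obtain ⟨x, -, hx⟩ := (mem_subtreeEdges hG).1 he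
  have hs := not_isBeyond_self hG s e
  have hcross := crossCount_le_of_contiguous _ hs s l fun a b c habc ha hc => by
    rcases List.sublist_cons_iff.1 habc with habc | ⟨r, hr, -⟩
    · exact hcontig e a b c habc ha hc
    · exact absurd ((List.cons.inj hr).1 ▸ ha) hs
  rw [if_neg hs] at hcross
  exact mul_le_mul_of_nonneg_right (by exact_mod_cast hcross)
    (hw e ((treePath hG s x).edges_subset_edgeSet hx))

end route

end

theorem tourCost_tree_eq_twice_subtree_general {α : Type*} [DecidableEq α]
    {G : SimpleGraph α} (hG : G.IsTree) (w : Sym2 α → ℝ)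
    (hw : ∀ e ∈ G.edgeSet, 0 ≤ w e) (s : α) (S : Finset α) :
    tourCost (treeDist hG w) s S =
      2 * ∑ e ∈ S.biUnion (fun v => (treePath hG s v).edges.toFinset), w e := by
  rcases S.eq_empty_or_nonempty with rfl | hS
  · simp [tourCost]
  obtain ⟨l, hperm, hcontig⟩ := exists_perm_isBeyond_contiguous hG s S.toList
  have hl : l.toFinset = S := by
    rw [List.toFinset_eq_of_perm _ _ hperm, Finset.toList_toFinset]
  rw [tourCost, if_neg hS.ne_empty]
  refine IsLeast.csInf_eq ⟨⟨l, hperm.nodup_iff.2 S.nodup_toList, hl, le_antisymm ?_ ?_⟩, ?_⟩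
  · exact two_mul_sum_le_routeLen hG w hw s hl
  · exact routeLen_le_two_mul_sum hG w hw s (fun x hx => hl ▸ List.mem_toFinset.2 hx) hcontig
  · rintro _ ⟨l', -, hl', rfl⟩
    exact two_mul_sum_le_routeLen hG w hw s hl'

/-- On a tree with nonnegative edge weights, the tour cost of any finite set `S` of
vertices (w.r.t. the tree metric and depot `s`) equals twice the total edge weight of
the minimal subtree containing `{s} ∪ S`, i.e. of the union of the paths from `s` to
the vertices of `S`. -/
theorem tourCost_tree_eq_twice_subtree {α : Type*} [Fintype α] [DecidableEq α]
    {G : SimpleGraph α} (hG : G.IsTree) (w : Sym2 α → ℝ)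
    (hw : ∀ e ∈ G.edgeSet, 0 ≤ w e) (s : α) (S : Finset α) :
    tourCost (treeDist hG w) s S =
      2 * ∑ e ∈ S.biUnion (fun v => (treePath hG s v).edges.toFinset), w e :=
  tourCost_tree_eq_twice_subtree_general hG w hw s S
end

section
/- Let (G,τ) be a tree instance of RFTT in which every turnover time τ(j) is a power of 2. Then the min-avg value of the instance equals 2 Σ_{e ∈ E} c(e)/q(e). Moreover, this value is attained by the periodic schedule J(k) = { j ∈ V : τ(j) divides k }. -/
open scoped BigOperators

/-- Feasibility for a rooted tree instance with depot `s`: every vertex `v ≠ s`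
(i.e. every client) is visited in every window of `τ v` consecutive days. -/
def FeasibleTree {α : Type*} (s : α) (τ : α → ℕ) (J : ℕ → Finset α) : Prop :=
  ∀ v : α, v ≠ s → ∀ t : ℕ, ∃ k : ℕ, t < k ∧ k ≤ t + τ v ∧ v ∈ J k

/-- The tt-weight `q(e) = min_{j ∈ D(e)} τ j` of an edge `e` of the tree rooted at the
depot `s`, where `D(e)` is the set of clients `j` lying below `e`, i.e. those `j ≠ s`
such that `e` lies on the path from `s` to `j`. -/
noncomputable def ttWeight {α : Type*} {G : SimpleGraph α} (hG : G.IsTree) (s : α)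
    (τ : α → ℕ) (e : Sym2 α) : ℕ :=
  sInf {m : ℕ | ∃ j : α, j ≠ s ∧ e ∈ (treePath hG s j).edges ∧ m = τ j}

/-- The min-avg value of a tree instance: the infimum over feasible periodic schedules
of the average daily tour cost. -/
noncomputable def minAvgTree {α : Type*} [Fintype α] [DecidableEq α]
    {G : SimpleGraph α} (hG : G.IsTree) (w : Sym2 α → ℝ) (s : α) (τ : α → ℕ) : ℝ :=
  sInf {x : ℝ | ∃ (J : ℕ → Finset α) (ℓ : ℕ), 1 ≤ ℓ ∧ (∀ k : ℕ, J (k + ℓ) = J k) ∧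
    FeasibleTree s τ J ∧
    x = (∑ k ∈ Finset.Icc 1 ℓ, tourCost (treeDist hG w) s (J k)) / (ℓ : ℝ)}

/-!
On a tree, a closed tour from the depot through a set `S` crosses every edge of the subtree
spanned by `S` and the depot at least twice, and visiting `S` in depth-first order (sorting
vertices lexicographically by their root paths) crosses each of those edges exactly twice and
no other edge. So the cost of day `k` is `∑ 2 c(e)` over the edges needed on that day. An edge
`e` is needed whenever the client `j ∈ D(e)` with `τ(j) = q(e)` is visited, which a feasible
schedule does at least once every `q(e)` days: this gives the lower bound. When all `τ(j)` are
powers of two, `q(e) ≤ τ(j)` forces `q(e) ∣ τ(j)`, so in `J(k) = {j : τ(j) ∣ k}` the edge `e` is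
needed exactly on the days divisible by `q(e)`, and the bound is attained.
-/

open Finset SimpleGraph

theorem List.IsPrefix.of_le_of_le_s5 {β : Type*} [LinearOrder β] {p x y z : List β}
    (hx : p <+: x) (hz : p <+: z) (hxy : x ≤ y) (hyz : y ≤ z) : p <+: y := by
  induction p generalizing x y z with
  | nil => exact List.nil_prefix
  | cons a p ih =>
    obtain ⟨x, rfl, hpx⟩ := List.cons_prefix_iff.mp hx
    obtain ⟨z, rfl, hpz⟩ := List.cons_prefix_iff.mp hz
    have cons_le : ∀ {b c : β} {u v : List β}, b :: u ≤ c :: v → b < c ∨ b = c ∧ u ≤ v := by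
      intro b c u v h
      rcases h.lt_or_eq with h | h
      · rcases List.cons_lex_cons_iff.mp h with hbc | ⟨rfl, huv⟩
        · exact .inl hbc
        · exact .inr ⟨rfl, (show u < v from huv).le⟩
      · obtain ⟨rfl, rfl⟩ := List.cons_eq_cons.mp h
        exact .inr ⟨rfl, le_rfl⟩
    rcases y with _ | ⟨b, y⟩
    · exact absurd hxy (not_le.mpr (List.Lex.nil : List.Lex (· < ·) [] (a :: x)))
    · rcases cons_le hxy with hab | ⟨rfl, hxy'⟩ <;> rcases cons_le hyz with hba | ⟨hba, hyz'⟩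
      · exact absurd (hab.trans hba) (lt_irrefl a)
      · exact absurd hab hba.symm.not_lt
      · exact absurd hba (lt_irrefl a)
      · exact List.cons_prefix_cons.mpr ⟨rfl, ih hpx hpz hxy' hyz'⟩

theorem Nat.le_mul_count_of_periodic {p : ℕ → Prop} [DecidablePred p] {ℓ q : ℕ}
    (hp : Function.Periodic p ℓ) (hq : ∀ t, ∃ i < q, p (t + i)) : ℓ ≤ q * Nat.count p ℓ := by
  have hwindows : ∀ m, m ≤ Nat.count p (m * q) := by
    intro m
    induction m with
    | zero => simp
    | succ m ih =>
      have : Nat.count (fun k => p (m * q + k)) q ≠ 0 := Nat.count_ne_iff_exists.mpr (hq (m * q))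
      rw [add_mul, one_mul, Nat.count_add]
      omega
  have hperiods : ∀ m, Nat.count p (m * ℓ) = m * Nat.count p ℓ := by
    intro m
    induction m with
    | zero => simp
    | succ m ih =>
      have hshift : (fun k => p (m * ℓ + k)) = p := funext fun k => by
        simpa [add_comm] using hp.nat_mul m k
      rw [add_mul, one_mul, Nat.count_add, ih]
      simp only [hshift]
      ring
  calc ℓ ≤ Nat.count p (ℓ * q) := hwindows ℓ
    _ = q * Nat.count p ℓ := by rw [mul_comm, hperiods]

theorem le_mul_card_filter_Icc_of_periodic {p : ℕ → Prop} [DecidablePred p] {ℓ q : ℕ}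
    (hp : Function.Periodic p ℓ) (hq : ∀ t, ∃ k, t < k ∧ k ≤ t + q ∧ p k) :
    ℓ ≤ q * #{k ∈ Icc 1 ℓ | p k} := by
  have hcard : #{k ∈ Icc 1 ℓ | p k} = Nat.count (fun k => p (k + 1)) ℓ := by
    rw [Nat.count_eq_card_filter_range]
    apply card_nbij' (· - 1) (· + 1) <;> intro k hk <;> simp at hk ⊢ <;> grind
  rw [hcard]
  refine Nat.le_mul_count_of_periodic (fun k => by rw [add_right_comm]; exact hp (k + 1))
    fun t => ?_
  obtain ⟨k, htk, hkt, hk⟩ := hq t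
  exact ⟨k - 1 - t, by omega, by rwa [show t + (k - 1 - t) + 1 = k by omega]⟩

namespace RFTT

/-! ### Value changes in a list of booleans -/

def flipCount : Bool → List Bool → ℕ
  | _, [] => 0
  | x, y :: l => (if x = y then 0 else 1) + flipCount y l

lemma flipCount_eq_zero {x : Bool} {l : List Bool} (h : ∀ b ∈ l, b = x) : flipCount x l = 0 := by
  induction l with
  | nil => rfl
  | cons y l ih =>
    obtain rfl : y = x := h y (by simp)
    simp [flipCount, ih fun b hb => h b (by simp [hb])]

lemma one_le_flipCount {x : Bool} {l : List Bool} (h : ∃ b ∈ l, b ≠ x) : 1 ≤ flipCount x l := by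
  induction l generalizing x with
  | nil => simp at h
  | cons y l ih =>
    by_cases hxy : x = y
    · subst hxy
      obtain ⟨b, hb, hbx⟩ := h
      have hbl : b ∈ l := (List.mem_cons.mp hb).resolve_left hbx
      simpa [flipCount] using ih ⟨b, hbl, hbx⟩
    · simp [flipCount, hxy]

lemma two_le_flipCount {l : List Bool} (h : true ∈ l) : 2 ≤ flipCount false (l ++ [false]) := by
  induction l with
  | nil => simp at h
  | cons b l ih =>
    cases b with
    | false => simpa [flipCount] using ih (by simpa using h)
    | true =>
      have : 1 ≤ flipCount true (l ++ [false]) := one_le_flipCount ⟨false, by simp, by simp⟩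
      simp only [List.cons_append, flipCount, Bool.false_eq_true, ↓reduceIte]
      omega

lemma flipCount_le_one {l : List Bool} (h : l.Pairwise (· ≥ ·)) :
    flipCount true (l ++ [false]) ≤ 1 := by
  induction l with
  | nil => simp [flipCount]
  | cons b l ih =>
    rw [List.pairwise_cons] at h
    cases b with
    | true => simpa [flipCount] using ih h.2
    | false =>
      have : flipCount false (l ++ [false]) = 0 :=
        flipCount_eq_zero fun c hc => by
          rcases List.mem_append.mp hc with hc | hc
          · exact le_bot_iff.mp (h.1 c hc)
          · simpa using hc
      simp [flipCount, this]

lemma flipCount_map_le_two {β : Type*} {r : β → β → Prop} {P : β → Bool} {l : List β}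
    (hl : l.Pairwise r) (hP : ∀ a b c, r a b → r b c → P a → P c → P b) :
    flipCount false (l.map P ++ [false]) ≤ 2 := by
  induction l with
  | nil => simp [flipCount]
  | cons a l ih =>
    rw [List.pairwise_cons] at hl
    cases hPa : P a with
    | false => simpa [flipCount, hPa] using ih hl.2
    | true =>
      have hsorted : (l.map P).Pairwise (· ≥ ·) :=
        List.pairwise_map.mpr <| hl.2.imp_of_mem fun hb _ hbc =>
          Bool.le_iff_imp.mpr (hP a _ _ (hl.1 _ hb) hbc hPa)
      have := flipCount_le_one hsorted
      simp only [List.map_cons, List.cons_append, flipCount, hPa, Bool.false_eq_true, ↓reduceIte]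
      omega

/-! ### Paths in a tree -/

section TreePaths

variable {α : Type*} {G : SimpleGraph α} (hG : G.IsTree)

lemma treePath_isPath (u v : α) : (treePath hG u v).IsPath :=
  (hG.existsUnique_path u v).exists.choose_spec

lemma treePath_eq {u v : α} {p : G.Walk u v} (hp : p.IsPath) : treePath hG u v = p :=
  (hG.existsUnique_path u v).unique (treePath_isPath hG u v) hp

lemma edges_treePath_self (v : α) : (treePath hG v v).edges = [] := by
  rw [treePath_eq hG Walk.IsPath.nil, Walk.edges_nil]

lemma ne_of_mem_edges_treePath {u v : α} {e : Sym2 α} (he : e ∈ (treePath hG u v).edges) :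
    v ≠ u := by
  rintro rfl
  simp [edges_treePath_self] at he

lemma edges_treePath_of_adj {s x y : α} (h : G.Adj x y) (hy : y ∉ (treePath hG s x).support) :
    (treePath hG s y).edges = (treePath hG s x).edges ++ [s(x, y)] := by
  rw [treePath_eq hG ((treePath_isPath hG s x).concat hy h), Walk.edges_concat,
    List.concat_eq_append]

variable [DecidableEq α]

lemma treePath_eq_takeUntil {s x y : α} (hy : y ∈ (treePath hG s x).support) :
    treePath hG s y = (treePath hG s x).takeUntil y hy :=
  treePath_eq hG ((treePath_isPath hG s x).takeUntil hy)

lemma mem_edges_treePath_of_adj (s : α) {x y : α} (h : G.Adj x y) (e : Sym2 α) :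
    e ∈ (treePath hG s y).edges ↔ ¬(e ∈ (treePath hG s x).edges ↔ e = s(x, y)) := by
  by_cases hy : y ∈ (treePath hG s x).support
  · have hx : x ∉ (treePath hG s y).support := by
      rw [treePath_eq_takeUntil hG hy]
      exact Walk.endpoint_notMem_support_takeUntil (treePath_isPath hG s x) hy h.ne
    have hyx : s(x, y) ∉ (treePath hG s y).edges := fun hm =>
      hx ((treePath hG s y).fst_mem_support_of_mem_edges hm)
    rw [edges_treePath_of_adj hG h.symm hx, Sym2.eq_swap]
    by_cases he : e = s(x, y) <;> simp [he, hyx]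
  · have hxy : s(x, y) ∉ (treePath hG s x).edges := fun hm =>
      hy ((treePath hG s x).snd_mem_support_of_mem_edges hm)
    rw [edges_treePath_of_adj hG h hy]
    by_cases he : e = s(x, y) <;> simp [he, hxy]

lemma mem_edges_treePath_iff (s u v : α) (e : Sym2 α) :
    e ∈ (treePath hG u v).edges ↔
      ¬(e ∈ (treePath hG s u).edges ↔ e ∈ (treePath hG s v).edges) := by
  suffices ∀ p : G.Walk u v, p.IsPath →
      (e ∈ p.edges ↔ ¬(e ∈ (treePath hG s u).edges ↔ e ∈ (treePath hG s v).edges)) from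
    this _ (treePath_isPath hG u v)
  intro p hp
  induction p with
  | nil => simp
  | @cons u x v h q ih =>
    have hux : s(u, x) ∉ q.edges := (List.nodup_cons.mp hp.edges_nodup).1
    have hq := ih hp.of_cons
    have hstep := mem_edges_treePath_of_adj hG s h e
    rw [Walk.edges_cons, List.mem_cons]
    by_cases he : e = s(u, x)
    · subst he
      tauto
    · tauto

lemma exists_mem_edges_treePath (s : α) {e : Sym2 α} (he : e ∈ G.edgeSet) :
    ∃ b ∈ e, e ∈ (treePath hG s b).edges := by
  induction e using Sym2.ind with
  | _ x y =>
    have := mem_edges_treePath_of_adj hG s he s(x, y)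
    by_cases hx : s(x, y) ∈ (treePath hG s x).edges
    · exact ⟨x, Sym2.mem_mk_left x y, hx⟩
    · exact ⟨y, Sym2.mem_mk_right x y, by tauto⟩

lemma mem_edges_treePath_iff_prefix (s : α) {e : Sym2 α} {b : α} (hbe : b ∈ e)
    (hb : e ∈ (treePath hG s b).edges) (v : α) :
    e ∈ (treePath hG s v).edges ↔ (treePath hG s b).support <+: (treePath hG s v).support := by
  constructor
  · intro hev
    have hbv : b ∈ (treePath hG s v).support := by
      induction e using Sym2.ind with
      | _ x y =>
        rcases Sym2.mem_iff.mp hbe with rfl | rfl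
        · exact (treePath hG s v).fst_mem_support_of_mem_edges hev
        · exact (treePath hG s v).snd_mem_support_of_mem_edges hev
    refine ⟨((treePath hG s v).dropUntil b hbv).support.tail, ?_⟩
    rw [treePath_eq_takeUntil hG hbv, ← Walk.support_append, Walk.take_spec]
  · intro hpre
    have hbv : b ∈ (treePath hG s v).support := hpre.subset (Walk.end_mem_support _)
    rw [treePath_eq_takeUntil hG hbv] at hb
    exact Walk.edges_takeUntil_subset_edges _ hbv hb

end TreePaths

/-! ### Tours in a tree -/

section Tours

variable {α : Type*} [DecidableEq α] {G : SimpleGraph α} (hG : G.IsTree) (s : α)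

/-- `isBelow hG s e v` says that `v ∈ D(e)`: the edge `e` lies on the path from the depot `s`
to `v`. -/
noncomputable def isBelow (e : Sym2 α) (v : α) : Bool :=
  decide (e ∈ (treePath hG s v).edges)

lemma isBelow_root (e : Sym2 α) : isBelow hG s e s = false := by
  simp [isBelow, edges_treePath_self]

variable [Fintype α] [DecidableRel G.Adj]

lemma treeDist_eq_sum (w : Sym2 α → ℝ) (u v : α) :
    treeDist hG w u v =
      ∑ e ∈ G.edgeFinset, if isBelow hG s e u = isBelow hG s e v then 0 else w e := by
  have hfilter : {e ∈ G.edgeFinset | e ∈ (treePath hG u v).edges} =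
      (treePath hG u v).edges.toFinset := by
    ext e
    simp only [mem_filter, List.mem_toFinset, mem_edgeFinset]
    exact ⟨And.right, fun h => ⟨(treePath hG u v).edges_subset_edgeSet h, h⟩⟩
  rw [treeDist, ← List.sum_toFinset _ (treePath_isPath hG u v).edges_nodup, ← hfilter, sum_filter]
  refine sum_congr rfl fun e _ => ?_
  by_cases hu : e ∈ (treePath hG s u).edges <;> by_cases hv : e ∈ (treePath hG s v).edges <;>
    simp [isBelow, mem_edges_treePath_iff hG s u v e, hu, hv]

/-- A route pays `c(e)` each time it crosses `e`, i.e. each time it passes between a vertex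
below `e` and one that is not. -/
lemma routeLen_treeDist (w : Sym2 α → ℝ) (l : List α) :
    routeLen (treeDist hG w) s l =
      ∑ e ∈ G.edgeFinset, w e * flipCount false (l.map (isBelow hG s e) ++ [false]) := by
  suffices ∀ a, (List.zip (a :: l) (l ++ [s])).foldr (fun p acc => treeDist hG w p.1 p.2 + acc) 0
      = ∑ e ∈ G.edgeFinset,
          w e * flipCount (isBelow hG s e a) (l.map (isBelow hG s e) ++ [false]) by
    simpa only [isBelow_root, routeLen] using this s
  induction l with
  | nil =>
    intro a
    simp [treeDist_eq_sum hG s, flipCount, isBelow_root]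
  | cons v l ih =>
    intro a
    simp only [List.cons_append, List.zip_cons_cons, List.foldr_cons, ih v,
      treeDist_eq_sum hG s w a v, ← sum_add_distrib, List.map_cons, flipCount]
    refine sum_congr rfl fun e _ => ?_
    split_ifs <;> push_cast <;> ring

noncomputable def spannedWeight (w : Sym2 α → ℝ) (S : Finset α) : ℝ :=
  ∑ e ∈ G.edgeFinset with ∃ v ∈ S, e ∈ (treePath hG s v).edges, w e

lemma two_mul_spannedWeight (w : Sym2 α → ℝ) (S : Finset α) :
    2 * spannedWeight hG s w S =
      ∑ e ∈ G.edgeFinset, if ∃ v ∈ S, e ∈ (treePath hG s v).edges then 2 * w e else 0 := by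
  rw [spannedWeight, mul_sum, sum_filter]

lemma two_mul_spannedWeight_le_routeLen {w : Sym2 α → ℝ} (hw : ∀ e ∈ G.edgeSet, 0 ≤ w e)
    {S : Finset α} {l : List α} (hS : S ⊆ l.toFinset) :
    2 * spannedWeight hG s w S ≤ routeLen (treeDist hG w) s l := by
  rw [two_mul_spannedWeight, routeLen_treeDist]
  refine sum_le_sum fun e he => ?_
  have hwe := hw e (mem_edgeFinset.mp he)
  split_ifs with hcov
  · obtain ⟨v, hv, hev⟩ := hcov
    have : 2 ≤ flipCount false (l.map (isBelow hG s e) ++ [false]) :=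
      two_le_flipCount (List.mem_map.mpr ⟨v, List.mem_toFinset.mp (hS hv), decide_eq_true hev⟩)
    have : (2 : ℝ) ≤ flipCount false (l.map (isBelow hG s e) ++ [false]) := by exact_mod_cast this
    nlinarith
  · positivity

/-- Depth-first order: sorting by root paths, lexicographically, makes the vertices below any
edge consecutive, so the route crosses each spanned edge at most twice. -/
lemma exists_routeLen_le_two_mul_spannedWeight {w : Sym2 α → ℝ}
    (hw : ∀ e ∈ G.edgeSet, 0 ≤ w e) (S : Finset α) :
    ∃ l : List α, l.Nodup ∧ l.toFinset = S ∧
      routeLen (treeDist hG w) s l ≤ 2 * spannedWeight hG s w S := by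
  let key : α → List (Fin (Fintype.card α)) := fun v =>
    (treePath hG s v).support.map (Fintype.equivFin α)
  let le : α → α → Bool := fun u v => decide (key u ≤ key v)
  let l := S.toList.mergeSort le
  have hsorted : l.Pairwise fun u v => le u v :=
    List.pairwise_mergeSort (fun _ _ _ hab hbc => decide_eq_true
      ((of_decide_eq_true hab).trans (of_decide_eq_true hbc)))
      (fun u v => by simpa [le] using le_total (key u) (key v)) _
  refine ⟨l, (List.mergeSort_perm _ _).nodup_iff.mpr S.nodup_toList, by ext; simp [l], ?_⟩
  rw [two_mul_spannedWeight, routeLen_treeDist]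
  refine sum_le_sum fun e he => ?_
  have hwe := hw e (mem_edgeFinset.mp he)
  split_ifs with hcov
  · obtain ⟨b, hbe, hb⟩ := exists_mem_edges_treePath hG s (mem_edgeFinset.mp he)
    have hbelow : ∀ v, isBelow hG s e v = true ↔ key b <+: key v := fun v => by
      rw [isBelow, decide_eq_true_iff, mem_edges_treePath_iff_prefix hG s hbe hb,
        List.prefix_map_iff_of_injective (Fintype.equivFin α).injective]
    have : flipCount false (l.map (isBelow hG s e) ++ [false]) ≤ 2 :=
      flipCount_map_le_two hsorted fun u v x huv hvx hu hx => (hbelow v).mpr <|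
        ((hbelow u).mp hu).of_le_of_le_s5 ((hbelow x).mp hx) (of_decide_eq_true huv)
          (of_decide_eq_true hvx)
    have : (flipCount false (l.map (isBelow hG s e) ++ [false]) : ℝ) ≤ 2 := by exact_mod_cast this
    nlinarith
  · have : flipCount false (l.map (isBelow hG s e) ++ [false]) = 0 := by
      refine flipCount_eq_zero fun x hx => ?_
      simp only [List.mem_append, List.mem_map, List.mem_singleton] at hx
      rcases hx with ⟨v, hv, rfl⟩ | rfl
      · simp only [isBelow, decide_eq_false_iff_not]
        exact fun hev => hcov ⟨v, by simpa [l] using hv, hev⟩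
      · rfl
    simp [this]

lemma tourCost_treeDist {w : Sym2 α → ℝ} (hw : ∀ e ∈ G.edgeSet, 0 ≤ w e) (S : Finset α) :
    tourCost (treeDist hG w) s S = 2 * spannedWeight hG s w S := by
  rw [tourCost]
  split_ifs with hS
  · simp [hS, spannedWeight]
  · obtain ⟨l, hnd, hl, hle⟩ := exists_routeLen_le_two_mul_spannedWeight hG s hw S
    refine IsLeast.csInf_eq ⟨?_, ?_⟩
    · exact ⟨l, hnd, hl, le_antisymm (two_mul_spannedWeight_le_routeLen hG s hw hl.superset) hle⟩
    · rintro x ⟨l', -, hl', rfl⟩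
      exact two_mul_spannedWeight_le_routeLen hG s hw hl'.superset

end Tours

/-! ### tt-weights and the synchronized schedule -/

section Schedules

variable {α : Type*} {G : SimpleGraph α} (hG : G.IsTree) (s : α) (τ : α → ℕ)

lemma ttWeight_le {e : Sym2 α} {j : α} (hj : j ≠ s) (hje : e ∈ (treePath hG s j).edges) :
    ttWeight hG s τ e ≤ τ j :=
  Nat.sInf_le ⟨j, hj, hje, rfl⟩

variable [DecidableEq α]

lemma exists_ttWeight_eq {e : Sym2 α} (he : e ∈ G.edgeSet) :
    ∃ j, j ≠ s ∧ e ∈ (treePath hG s j).edges ∧ ttWeight hG s τ e = τ j := by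
  obtain ⟨b, -, hb⟩ := exists_mem_edges_treePath hG s he
  exact Nat.sInf_mem (s := {m | ∃ j, j ≠ s ∧ e ∈ (treePath hG s j).edges ∧ m = τ j})
    ⟨τ b, b, ne_of_mem_edges_treePath hG hb, hb, rfl⟩

lemma ttWeight_dvd (hpow : ∀ v : α, v ≠ s → ∃ i : ℕ, τ v = 2 ^ i) {e : Sym2 α}
    (he : e ∈ G.edgeSet) {j : α} (hj : j ≠ s) (hje : e ∈ (treePath hG s j).edges) :
    ttWeight hG s τ e ∣ τ j := by
  obtain ⟨j₀, hj₀, -, hq⟩ := exists_ttWeight_eq hG s τ he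
  obtain ⟨a, ha⟩ := hpow j₀ hj₀
  obtain ⟨b, hb⟩ := hpow j hj
  have hle := ttWeight_le hG s τ hj hje
  rw [hq, ha, hb] at hle ⊢
  exact pow_dvd_pow 2 ((Nat.pow_le_pow_iff_right one_lt_two).mp hle)

variable [Fintype α]

def syncSchedule (k : ℕ) : Finset α := {j | j ≠ s ∧ τ j ∣ k}

lemma feasible_syncSchedule (hτ : ∀ v : α, v ≠ s → 1 ≤ τ v) :
    FeasibleTree s τ (syncSchedule s τ) := by
  intro v hv t
  have hlt := Nat.lt_mul_div_succ t (hτ v hv)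
  have hle := Nat.mul_div_le t (τ v)
  refine ⟨τ v * (t / τ v + 1), hlt, by rw [mul_add_one]; omega, ?_⟩
  simp [syncSchedule, hv]

lemma syncSchedule_add_of_dvd {n : ℕ} (hn : ∀ j : α, j ≠ s → τ j ∣ n) (k : ℕ) :
    syncSchedule s τ (k + n) = syncSchedule s τ k := by
  ext j
  simp only [syncSchedule, mem_filter, mem_univ, true_and, and_congr_right_iff]
  exact fun hj => Nat.dvd_add_left (hn j hj)

lemma exists_mem_syncSchedule_iff (hpow : ∀ v : α, v ≠ s → ∃ i : ℕ, τ v = 2 ^ i)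
    {e : Sym2 α} (he : e ∈ G.edgeSet) (k : ℕ) :
    (∃ v ∈ syncSchedule s τ k, e ∈ (treePath hG s v).edges) ↔ ttWeight hG s τ e ∣ k := by
  constructor
  · rintro ⟨v, hv, hev⟩
    simp only [syncSchedule, mem_filter, mem_univ, true_and] at hv
    exact (ttWeight_dvd hG s τ hpow he hv.1 hev).trans hv.2
  · intro hk
    obtain ⟨j, hj, hje, hq⟩ := exists_ttWeight_eq hG s τ he
    exact ⟨j, by simp [syncSchedule, hj, ← hq, hk], hje⟩

/-! ### Cost of periodic schedules -/

variable [DecidableRel G.Adj] {w : Sym2 α → ℝ} (hw : ∀ e ∈ G.edgeSet, 0 ≤ w e)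
include hw

lemma sum_tourCost_treeDist (J : ℕ → Finset α) (ℓ : ℕ) :
    ∑ k ∈ Icc 1 ℓ, tourCost (treeDist hG w) s (J k) =
      ∑ e ∈ G.edgeFinset, 2 * w e * #{k ∈ Icc 1 ℓ | ∃ v ∈ J k, e ∈ (treePath hG s v).edges} := by
  simp_rw [tourCost_treeDist hG s hw, two_mul_spannedWeight]
  rw [sum_comm]
  refine sum_congr rfl fun e _ => ?_
  rw [← sum_filter, sum_const, nsmul_eq_mul, mul_comm]

lemma sum_tourCost_syncSchedule_div (hpow : ∀ v : α, v ≠ s → ∃ i : ℕ, τ v = 2 ^ i) {L : ℕ}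
    (hL0 : L ≠ 0) (hL : ∀ j : α, j ≠ s → τ j ∣ L) :
    (∑ k ∈ Icc 1 L, tourCost (treeDist hG w) s (syncSchedule s τ k)) / L =
      2 * ∑ e ∈ G.edgeFinset, w e / ttWeight hG s τ e := by
  rw [sum_tourCost_treeDist hG s hw, sum_div, mul_sum]
  refine sum_congr rfl fun e he => ?_
  have he' := mem_edgeFinset.mp he
  obtain ⟨j, hj, -, hq⟩ := exists_ttWeight_eq hG s τ he'
  obtain ⟨i, hi⟩ := hpow j hj
  have hq0 : (ttWeight hG s τ e : ℝ) ≠ 0 := by rw [hq, hi]; positivity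
  have hdays : #{k ∈ Icc 1 L | ∃ v ∈ syncSchedule s τ k, e ∈ (treePath hG s v).edges} =
      L / ttWeight hG s τ e := by
    simp_rw [exists_mem_syncSchedule_iff hG s τ hpow he']
    rw [← Nat.Ioc_filter_dvd_card_eq_div, ← Icc_add_one_left_eq_Ioc, zero_add]
  rw [hdays, Nat.cast_div (hq ▸ hL j hj) hq0]
  field_simp

lemma two_mul_sum_div_ttWeight_le {J : ℕ → Finset α} {ℓ : ℕ} (hℓ : 1 ≤ ℓ)
    (hper : ∀ k, J (k + ℓ) = J k) (hfeas : FeasibleTree s τ J) :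
    2 * ∑ e ∈ G.edgeFinset, w e / ttWeight hG s τ e ≤
      (∑ k ∈ Icc 1 ℓ, tourCost (treeDist hG w) s (J k)) / ℓ := by
  rw [le_div_iff₀ (by exact_mod_cast hℓ), sum_tourCost_treeDist hG s hw, mul_sum, sum_mul]
  refine sum_le_sum fun e he => ?_
  obtain ⟨j, hj, hje, hq⟩ := exists_ttWeight_eq hG s τ (mem_edgeFinset.mp he)
  set days := #{k ∈ Icc 1 ℓ | ∃ v ∈ J k, e ∈ (treePath hG s v).edges}
  have hvisits : ℓ ≤ ttWeight hG s τ e * #{k ∈ Icc 1 ℓ | j ∈ J k} :=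
    hq ▸ le_mul_card_filter_Icc_of_periodic (fun k => by simp only [hper]) (hfeas j hj)
  have hsub : #{k ∈ Icc 1 ℓ | j ∈ J k} ≤ days :=
    card_le_card (monotone_filter_right _ fun _ _ hk => ⟨j, hk, hje⟩)
  have hq0 : (0 : ℝ) < ttWeight hG s τ e := by
    obtain ⟨k, h1, h2, -⟩ := hfeas j hj 0
    exact_mod_cast hq ▸ (show 0 < τ j by omega)
  have hdays : (ℓ : ℝ) / ttWeight hG s τ e ≤ days := by
    rw [div_le_iff₀ hq0]
    exact_mod_cast hvisits.trans ((Nat.mul_le_mul_left _ hsub).trans_eq (mul_comm _ _))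
  have hwe := hw e (mem_edgeFinset.mp he)
  calc 2 * (w e / ttWeight hG s τ e) * ℓ = 2 * w e * (ℓ / ttWeight hG s τ e) := by ring
    _ ≤ 2 * w e * days := by gcongr

end Schedules

end RFTT

/-- For tree instances in which all turnover times are powers of 2, the min-avg value
equals `2 ∑_e c(e)/q(e)`, and this value is attained by the synchronized periodic
schedule `J k = { j : τ j ∣ k }` (with period the lcm of the turnover times). -/
theorem tree_minAvg_powers_of_two {α : Type*} [Fintype α] [DecidableEq α]
    {G : SimpleGraph α} [DecidableRel G.Adj] (hG : G.IsTree) (w : Sym2 α → ℝ)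
    (hw : ∀ e ∈ G.edgeSet, 0 ≤ w e) (s : α) (τ : α → ℕ)
    (hτ : ∀ v : α, v ≠ s → 1 ≤ τ v)
    (hpow : ∀ v : α, v ≠ s → ∃ i : ℕ, τ v = 2 ^ i) :
    minAvgTree hG w s τ = 2 * ∑ e ∈ G.edgeFinset, w e / (ttWeight hG s τ e : ℝ) ∧
    FeasibleTree s τ (fun k => Finset.univ.filter (fun j => j ≠ s ∧ τ j ∣ k)) ∧
    (∀ k : ℕ,
      Finset.univ.filter (fun j => j ≠ s ∧ τ j ∣ (k + (Finset.univ.erase s).lcm τ)) =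
      Finset.univ.filter (fun j => j ≠ s ∧ τ j ∣ k)) ∧
    (∑ k ∈ Finset.Icc 1 ((Finset.univ.erase s).lcm τ),
        tourCost (treeDist hG w) s (Finset.univ.filter (fun j => j ≠ s ∧ τ j ∣ k))) /
      (((Finset.univ.erase s).lcm τ : ℕ) : ℝ) =
      2 * ∑ e ∈ G.edgeFinset, w e / (ttWeight hG s τ e : ℝ) := by
  have hL : ∀ j, j ≠ s → τ j ∣ (univ.erase s).lcm τ := fun j hj =>
    dvd_lcm (mem_erase.mpr ⟨hj, mem_univ j⟩)
  have hL0 : (univ.erase s).lcm τ ≠ 0 := fun h0 => by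
    obtain ⟨j, hj, hj0⟩ := lcm_eq_zero_iff.mp h0
    exact absurd (hτ j (ne_of_mem_erase hj)) (by omega)
  have hfeas := RFTT.feasible_syncSchedule s τ hτ
  have hper := RFTT.syncSchedule_add_of_dvd s τ hL
  have havg := RFTT.sum_tourCost_syncSchedule_div hG s τ hw hpow hL0 hL
  refine ⟨IsLeast.csInf_eq ⟨⟨_, _, Nat.one_le_iff_ne_zero.mpr hL0, hper, hfeas, havg.symm⟩, ?_⟩,
    hfeas, hper, havg⟩
  rintro x ⟨J, ℓ, hℓ, hperJ, hfeasJ, rfl⟩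
  exact RFTT.two_mul_sum_div_ttWeight_le hG s τ hw hℓ hperJ hfeasJ
end

section
/- Let p_1,…,p_n be positive integers (n ≥ 1) and consider the RFTT instance on the unweighted star: clients 1,…,n with turnover times τ(j) = p_j, each at distance 1 from the depot, so that the tour cost of a nonempty set S of clients equals 2|S|. If there exists a pinwheel schedule for p_1,…,p_n, then the min-max value of this instance equals 2; otherwise every feasible schedule J satisfies sup_k c(J(k)) ≥ 4. -/
open scoped BigOperators

/-- The min-max value of the RFTT instance on the unweighted star with `n` leaves
(clients), where the tour cost of a set `S` of clients is `2|S|`: the infimum over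
feasible schedules of `sup_k c(J k)` (expressed as the infimum over uniform upper
bounds on the daily tour costs of feasible schedules). -/
noncomputable def starMinMax {n : ℕ} (p : Fin n → ℕ) : ℝ :=
  sInf {B : ℝ | ∃ J : ℕ → Finset (Fin n), Feasible p J ∧
    ∀ k : ℕ, 2 * ((J k).card : ℝ) ≤ B}

/-!
Some day of a feasible schedule must visit a client, so the min-max value is at least 2, and a
pinwheel schedule attains it. Conversely, a feasible schedule visiting at most one client on
every day `k ≥ 1` becomes a pinwheel schedule once day `0`, which no window inspects, is emptied.
-/

namespace Feasible

variable {V : Type*} {τ : V → ℕ} {J : ℕ → Finset V}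

theorem exists_nonempty [Nonempty V] (hJ : Feasible τ J) : ∃ k, (J k).Nonempty :=
  let ⟨v⟩ := ‹Nonempty V›
  let ⟨k, _, _, hv⟩ := hJ v 0
  ⟨k, v, hv⟩

theorem congr_pos {J' : ℕ → Finset V} (hJ : Feasible τ J) (hJJ' : ∀ k, 0 < k → J' k = J k) :
    Feasible τ J' := by
  intro v t
  obtain ⟨k, htk, hkt, hv⟩ := hJ v t
  exact ⟨k, htk, hkt, hJJ' k (by omega) ▸ hv⟩

theorem exists_pinwheel_of_card_lt_two (hJ : Feasible τ J)
    (hcard : ∀ k, 1 ≤ k → (J k).card < 2) :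
    ∃ σ : ℕ → Finset V, Feasible τ σ ∧ ∀ k, (σ k).card ≤ 1 := by
  refine ⟨fun k => if k = 0 then ∅ else J k, hJ.congr_pos fun k hk => if_neg hk.ne', fun k => ?_⟩
  by_cases hk : k = 0
  · simp [hk]
  · simpa [hk, Nat.lt_succ_iff] using hcard k (Nat.one_le_iff_ne_zero.mpr hk)

end Feasible

theorem starMinMax_eq_two {n : ℕ} [Nonempty (Fin n)] {p : Fin n → ℕ}
    {σ : ℕ → Finset (Fin n)} (hσ : Feasible p σ) (hσ_card : ∀ k, (σ k).card ≤ 1) :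
    starMinMax p = 2 := by
  refine IsLeast.csInf_eq ⟨⟨σ, hσ, fun k => ?_⟩, ?_⟩
  · have : ((σ k).card : ℝ) ≤ 1 := by exact_mod_cast hσ_card k
    linarith
  · rintro B ⟨J, hJ, hB⟩
    obtain ⟨k, hk⟩ := hJ.exists_nonempty
    have : (1 : ℝ) ≤ (J k).card := by exact_mod_cast hk.card_pos
    linarith [hB k]

theorem star_minMax_pinwheel_general (n : ℕ) (hn : 1 ≤ n) (p : Fin n → ℕ) :
    ((∃ σ : ℕ → Finset (Fin n), Feasible p σ ∧ ∀ k : ℕ, (σ k).card ≤ 1) →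
      starMinMax p = 2) ∧
    ((¬ ∃ σ : ℕ → Finset (Fin n), Feasible p σ ∧ ∀ k : ℕ, (σ k).card ≤ 1) →
      ∀ J : ℕ → Finset (Fin n), Feasible p J →
        ∃ k : ℕ, 1 ≤ k ∧ (4 : ℝ) ≤ 2 * ((J k).card : ℝ)) := by
  have : Nonempty (Fin n) := ⟨⟨0, hn⟩⟩
  refine ⟨fun ⟨σ, hσ, hσ_card⟩ => starMinMax_eq_two hσ hσ_card, fun hno J hJ => ?_⟩
  by_contra! hsmall
  refine hno (hJ.exists_pinwheel_of_card_lt_two fun k hk => ?_)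
  have : ((J k).card : ℝ) < 2 := by linarith [hsmall k hk]
  exact_mod_cast this

/-- On the unweighted star with turnover times `p_1, …, p_n`: if a pinwheel schedule
for `p` exists then the min-max value equals 2; otherwise every feasible schedule has
some day of tour cost at least 4. -/
theorem star_minMax_pinwheel (n : ℕ) (hn : 1 ≤ n) (p : Fin n → ℕ)
    (hp : ∀ j : Fin n, 1 ≤ p j) :
    ((∃ σ : ℕ → Finset (Fin n), Feasible p σ ∧ ∀ k : ℕ, (σ k).card ≤ 1) →
      starMinMax p = 2) ∧
    ((¬ ∃ σ : ℕ → Finset (Fin n), Feasible p σ ∧ ∀ k : ℕ, (σ k).card ≤ 1) →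
      ∀ J : ℕ → Finset (Fin n), Feasible p J →
        ∃ k : ℕ, 1 ≤ k ∧ (4 : ℝ) ≤ 2 * ((J k).card : ℝ)) :=
  star_minMax_pinwheel_general n hn p
end

section
/- Let m ≥ 1 and let a_1,…,a_{3m} be positive integers with Σ_{i=1}^{3m} a_i = mB and B/4 < a_i < B/2 for every i. Then the following are equivalent: (1) there exists a feasible schedule J : ℕ≥1 → Finset {1,…,3m} for the constant turnover times τ(i) = m such that Σ_{i ∈ J(k)} a_i ≤ B for every day k; (2) the set {1,…,3m} can be partitioned into m three-element sets, each of which has Σ a_i = B. -/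
open scoped BigOperators

/-!
The cyclic schedule serving the `l`-th triple on the days `k ≡ l (mod m)` visits every client
once in every `m` consecutive days, with daily load `B`. Conversely, days `1, …, m` of a feasible
schedule visit every client. Their loads are at most `B` and cover the total weight `m * B`, so no
weight is counted twice: these days are pairwise disjoint with load exactly `B`. As `4 * a i > B`,
each of them holds at most three clients, and together they hold all `3 * m`, so exactly three.
-/

open Finset

namespace Finset

variable {ι α M : Type*} [DecidableEq α] [AddCommMonoid M] [PartialOrder M]
  [CanonicallyOrderedAdd M]

theorem sum_union_le_add (s t : Finset α) (f : α → M) :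
    ∑ x ∈ s ∪ t, f x ≤ ∑ x ∈ s, f x + ∑ x ∈ t, f x :=
  sum_union_inter (f := f) ▸ le_self_add

theorem sum_biUnion_le_sum_sum [IsOrderedAddMonoid M] (s : Finset ι) (t : ι → Finset α)
    (f : α → M) :
    ∑ x ∈ s.biUnion t, f x ≤ ∑ i ∈ s, ∑ x ∈ t i, f x := by
  rw [← sup_eq_biUnion]
  exact apply_sup_le_sum (f := fun u => ∑ x ∈ u, f x) sum_empty (sum_union_le_add _ _ f) s

theorem pairwiseDisjoint_of_sum_sum_le_sum_biUnion [IsOrderedCancelAddMonoid M] [DecidableEq ι]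
    {s : Finset ι} {t : ι → Finset α} {f : α → M} (hf : ∀ x ∈ s.biUnion t, 0 < f x)
    (h : ∑ i ∈ s, ∑ x ∈ t i, f x ≤ ∑ x ∈ s.biUnion t, f x) :
    (s : Set ι).PairwiseDisjoint t := by
  intro i hi j hj hij
  rw [Function.onFun, disjoint_left]
  intro x hxi hxj
  set rest := (s.erase j).biUnion t
  have hx : x ∈ rest ∩ t j :=
    mem_inter.2 ⟨mem_biUnion.2 ⟨i, mem_erase.2 ⟨hij, hi⟩, hxi⟩, hxj⟩
  have hunion : s.biUnion t = rest ∪ t j := by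
    rw [union_comm, ← biUnion_insert, insert_erase hj]
  have hpos : 0 < ∑ y ∈ rest ∩ t j, f y :=
    (hf x (hunion ▸ mem_union_left _ (mem_inter.1 hx).1)).trans_le
      (single_le_sum (fun _ _ => zero_le) hx)
  have hcount : ∑ y ∈ s.biUnion t, f y + ∑ y ∈ rest ∩ t j, f y ≤ ∑ y ∈ s.biUnion t, f y :=
    calc ∑ y ∈ s.biUnion t, f y + ∑ y ∈ rest ∩ t j, f y
        = ∑ y ∈ rest, f y + ∑ y ∈ t j, f y := by rw [hunion, sum_union_inter]
      _ ≤ ∑ k ∈ s.erase j, ∑ y ∈ t k, f y + ∑ y ∈ t j, f y := by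
          gcongr; exact sum_biUnion_le_sum_sum _ _ _
      _ = ∑ k ∈ s, ∑ y ∈ t k, f y := sum_erase_add _ _ hj
      _ ≤ ∑ y ∈ s.biUnion t, f y := h
  exact hpos.not_ge ((add_le_iff_nonpos_right _).1 hcount)

theorem pairwiseDisjoint_and_sum_eq_of_card_nsmul_le [IsOrderedCancelAddMonoid M] [DecidableEq ι]
    {s : Finset ι} {t : ι → Finset α} {f : α → M} {c : M} (hf : ∀ x ∈ s.biUnion t, 0 < f x)
    (hle : ∀ i ∈ s, ∑ x ∈ t i, f x ≤ c) (htotal : #s • c ≤ ∑ x ∈ s.biUnion t, f x) :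
    (s : Set ι).PairwiseDisjoint t ∧ ∀ i ∈ s, ∑ x ∈ t i, f x = c := by
  have hsum_le : ∑ i ∈ s, ∑ x ∈ t i, f x ≤ #s • c := sum_le_card_nsmul _ _ _ hle
  have htight : ∑ i ∈ s, ∑ x ∈ t i, f x = ∑ _i ∈ s, c := by
    rw [sum_const]
    exact hsum_le.antisymm (htotal.trans (sum_biUnion_le_sum_sum _ _ _))
  exact ⟨pairwiseDisjoint_of_sum_sum_le_sum_biUnion hf (hsum_le.trans htotal),
    (sum_eq_sum_iff_of_le hle).1 htight⟩

theorem card_lt_of_sum_le_of_lt_mul {s : Finset ι} {a : ι → ℕ} {B n : ℕ} (hn : 0 < n)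
    (hlt : ∀ i ∈ s, B < n * a i) (hsum : ∑ i ∈ s, a i ≤ B) : #s < n := by
  rcases s.eq_empty_or_nonempty with rfl | hs
  · simpa using hn
  refine Nat.lt_of_mul_lt_mul_right (a := B) ?_
  calc #s * B = ∑ _i ∈ s, B := by rw [sum_const, smul_eq_mul]
    _ < ∑ i ∈ s, n * a i := sum_lt_sum_of_nonempty hs hlt
    _ = n * ∑ i ∈ s, a i := (mul_sum _ _ _).symm
    _ ≤ n * B := by gcongr

end Finset

theorem Nat.exists_mem_Ioc_mod_eq {m l : ℕ} (hl : l < m) (t : ℕ) :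
    ∃ k ∈ Ioc t (t + m), k % m = l := by
  have hdiv := Nat.div_add_mod (t + m - l) m
  have hmod := Nat.mod_lt (t + m - l) (l.zero_le.trans_lt hl)
  refine ⟨l + m * ((t + m - l) / m), mem_Ioc.2 ⟨by omega, by omega⟩, ?_⟩
  rw [Nat.add_mul_mod_self_left, Nat.mod_eq_of_lt hl]

def cyclicSchedule {V : Type*} {m : ℕ} (hm : 0 < m) (P : Fin m → Finset V) : ℕ → Finset V :=
  fun k => P ⟨k % m, Nat.mod_lt k hm⟩

theorem feasible_cyclicSchedule {V : Type*} {m : ℕ} (hm : 0 < m) {P : Fin m → Finset V}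
    (hcover : ∀ v, ∃ l, v ∈ P l) : Feasible (fun _ => m) (cyclicSchedule hm P) := by
  intro v t
  obtain ⟨l, hv⟩ := hcover v
  obtain ⟨k, hk, hkl⟩ := Nat.exists_mem_Ioc_mod_eq l.isLt t
  obtain ⟨htk, hkt⟩ := mem_Ioc.1 hk
  exact ⟨k, htk, hkt, by simpa [cyclicSchedule, hkl] using hv⟩

theorem Feasible.biUnion_firstWindow_eq_univ {V : Type*} [Fintype V] [DecidableEq V] {m : ℕ}
    {J : ℕ → Finset V} (hJ : Feasible (fun _ => m) J) :
    univ.biUnion (fun l : Fin m => J (l + 1)) = univ := by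
  refine eq_univ_of_forall fun v => ?_
  obtain ⟨k, hk, hkm : k ≤ 0 + m, hv⟩ := hJ v 0
  refine mem_biUnion.2 ⟨⟨k - 1, by omega⟩, mem_univ _, ?_⟩
  rwa [Nat.sub_add_cancel hk]

theorem star_threePartition_general (m B : ℕ) (hm : 1 ≤ m) (a : Fin (3 * m) → ℕ)
    (hsum : ∑ i, a i = m * B) (hlb : ∀ i, B < 4 * a i) :
    (∃ J : ℕ → Finset (Fin (3 * m)), Feasible (fun _ => m) J ∧
      ∀ k : ℕ, 1 ≤ k → ∑ i ∈ J k, a i ≤ B) ↔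
    (∃ P : Fin m → Finset (Fin (3 * m)),
      (∀ l : Fin m, (P l).card = 3 ∧ ∑ i ∈ P l, a i = B) ∧
      (∀ l l' : Fin m, l ≠ l' → Disjoint (P l) (P l')) ∧
      Finset.univ.biUnion P = Finset.univ) := by
  constructor
  · rintro ⟨J, hJ, hload⟩
    set P : Fin m → Finset (Fin (3 * m)) := fun l => J (l + 1)
    have hcover : univ.biUnion P = univ := hJ.biUnion_firstWindow_eq_univ
    have hloadP : ∀ l, ∑ i ∈ P l, a i ≤ B := fun l => hload _ l.val.succ_pos
    obtain ⟨hdisj, hloadB⟩ := pairwiseDisjoint_and_sum_eq_of_card_nsmul_le (s := univ) (t := P)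
      (f := a) (c := B) (fun i _ => by have := hlb i; omega) (fun l _ => hloadP l)
      (by rw [hcover, hsum, card_univ, Fintype.card_fin, smul_eq_mul])
    obtain ⟨-, hthree⟩ := pairwiseDisjoint_and_sum_eq_of_card_nsmul_le (s := univ) (t := P)
      (f := fun _ => 1) (c := 3) (fun _ _ => one_pos)
      (fun l _ => by
        simpa [← Nat.lt_succ_iff] using
          card_lt_of_sum_le_of_lt_mul four_pos (fun i _ => hlb i) (hloadP l))
      (by simp [hcover, mul_comm])
    refine ⟨P, fun l => ⟨by simpa using hthree l (mem_univ l), hloadB l (mem_univ l)⟩,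
      fun l l' => hdisj (mem_coe.2 (mem_univ l)) (mem_coe.2 (mem_univ l')), hcover⟩
  · rintro ⟨P, hP, -, hcover⟩
    refine ⟨cyclicSchedule hm P, feasible_cyclicSchedule hm fun v => ?_, fun k _ => (hP _).2.le⟩
    simpa using hcover.ge (mem_univ v)

/-- Reduction from 3-Partition: for positive integers `a_1, …, a_{3m}` with
`∑ a_i = m·B` and `B/4 < a_i < B/2`, there is a feasible schedule for constant
turnover times `m` whose daily loads `∑_{i ∈ J k} a_i` never exceed `B` (for days
`k ≥ 1`) if and only if the indices can be partitioned into `m` triples each of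
`a`-sum exactly `B`. -/
theorem star_threePartition (m B : ℕ) (hm : 1 ≤ m) (a : Fin (3 * m) → ℕ)
    (ha : ∀ i, 1 ≤ a i) (hsum : ∑ i, a i = m * B)
    (hlb : ∀ i, B < 4 * a i) (hub : ∀ i, 2 * a i < B) :
    (∃ J : ℕ → Finset (Fin (3 * m)), Feasible (fun _ => m) J ∧
      ∀ k : ℕ, 1 ≤ k → ∑ i ∈ J k, a i ≤ B) ↔
    (∃ P : Fin m → Finset (Fin (3 * m)),
      (∀ l : Fin m, (P l).card = 3 ∧ ∑ i ∈ P l, a i = B) ∧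
      (∀ l l' : Fin m, l ≠ l' → Disjoint (P l) (P l')) ∧
      Finset.univ.biUnion P = Finset.univ) :=
  star_threePartition_general m B hm a hsum hlb
end

section
/- Let T be a finite tree and let S be a subset of its vertices with |S| even. Then there exists a partition of S into pairs such that the unique paths in T between the two vertices of each pair are pairwise edge-disjoint. -/
open Finset

namespace SimpleGraph

variable {V : Type*} {G : SimpleGraph V}

lemma Walk.dist_add_one_add_dist_le_of_mem_edges {u v x y : V} {p : G.Walk u v}
    (hp : p.length = G.dist u v) (he : s(x, y) ∈ p.edges) :
    G.dist u x + 1 + G.dist y v ≤ G.dist u v ∨ G.dist u y + 1 + G.dist x v ≤ G.dist u v := by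
  rcases (Walk.isSubwalk_toWalk_iff_mem_edges (p.adj_of_mem_edges he)).mpr he with
    ⟨ru, rv, hpq⟩ | ⟨ru, rv, hpq⟩ <;>
  · rw [hpq, Walk.length_append, Walk.length_append, Adj.length_toWalk] at hp
    have := dist_le ru
    have := dist_le rv
    omega

lemma Connected.dist_add_dist_lt_of_mem_edges (hG : G.Connected) {u v w z : V}
    {p : G.Walk u v} {q : G.Walk w z} (hp : p.length = G.dist u v)
    (hq : q.length = G.dist w z) {e : Sym2 V} (hep : e ∈ p.edges) (heq : e ∈ q.edges) :
    G.dist u w + G.dist v z < G.dist u v + G.dist w z ∨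
      G.dist u z + G.dist v w < G.dist u v + G.dist w z := by
  induction e using Sym2.ind with
  | _ x y =>
    have := hG.dist_triangle (u := u) (v := x) (w := w)
    have := hG.dist_triangle (u := u) (v := y) (w := w)
    have := hG.dist_triangle (u := v) (v := x) (w := z)
    have := hG.dist_triangle (u := v) (v := y) (w := z)
    have := hG.dist_triangle (u := u) (v := x) (w := z)
    have := hG.dist_triangle (u := u) (v := y) (w := z)
    have := hG.dist_triangle (u := v) (v := x) (w := w)
    have := hG.dist_triangle (u := v) (v := y) (w := w)
    have := G.dist_comm (u := x) (v := w)
    have := G.dist_comm (u := y) (v := w)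
    have := G.dist_comm (u := v) (v := x)
    have := G.dist_comm (u := v) (v := y)
    rcases Walk.dist_add_one_add_dist_le_of_mem_edges hp hep with h | h <;>
    rcases Walk.dist_add_one_add_dist_le_of_mem_edges hq heq with h' | h' <;>
    omega

lemma IsTree.length_eq_dist_of_isPath (hG : G.IsTree) {u v : V} {p : G.Walk u v}
    (hp : p.IsPath) : p.length = G.dist u v := by
  obtain ⟨q, hq, hlen⟩ := (hG.connected.preconnected u v).exists_path_of_dist
  rw [(hG.existsUnique_path u v).unique hp hq, hlen]

end SimpleGraph

lemma treePath_length {V : Type*} {G : SimpleGraph V} (hG : G.IsTree) (u v : V) :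
    (treePath hG u v).length = G.dist u v :=
  hG.length_eq_dist_of_isPath (hG.existsUnique_path u v).exists.choose_spec

section

variable {V : Type*} [DecidableEq V]

/-- A pairing of `S`, encoded as a fixed-point-free involution of `S`; the values of `σ` outside
`S` are irrelevant. -/
structure IsPairing (S : Finset V) (σ : V → V) : Prop where
  mem : ∀ v ∈ S, σ v ∈ S
  ne : ∀ v ∈ S, σ v ≠ v
  apply_apply : ∀ v ∈ S, σ (σ v) = v

noncomputable def pairingCost (G : SimpleGraph V) (S : Finset V) (σ : V → V) : ℕ :=
  ∑ v ∈ S, G.dist v (σ v)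

namespace IsPairing

variable {S : Finset V} {σ : V → V}

lemma insert_insert {a b : V} (hσ : IsPairing S σ) (ha : a ∉ S) (hb : b ∉ S) (hab : a ≠ b) :
    IsPairing (insert a (insert b S)) fun v => if v = a then b else if v = b then a else σ v := by
  have hva : ∀ v ∈ S, v ≠ a := fun v hv h => ha (h ▸ hv)
  have hvb : ∀ v ∈ S, v ≠ b := fun v hv h => hb (h ▸ hv)
  have hσa : ∀ v ∈ S, σ v ≠ a := fun v hv => hva _ (hσ.mem v hv)
  have hσb : ∀ v ∈ S, σ v ≠ b := fun v hv => hvb _ (hσ.mem v hv)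
  refine ⟨?_, ?_, ?_⟩ <;> intro v hv <;> simp only [mem_insert] at hv <;>
    rcases hv with rfl | rfl | hv <;>
    first
    | simp [hva v hv, hvb v hv, hσa v hv, hσb v hv, hσ.mem v hv, hσ.ne v hv, hσ.apply_apply v hv]
    | simp [hab, hab.symm]

lemma exists_of_even (hS : Even #S) : ∃ σ, IsPairing S σ := by
  obtain ⟨n, hn⟩ := hS
  induction n generalizing S with
  | zero =>
    obtain rfl : S = ∅ := card_eq_zero.1 (by omega)
    exact ⟨id, by simp, by simp, by simp⟩
  | succ n ih =>
    obtain ⟨a, ha⟩ : S.Nonempty := card_pos.1 (by omega)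
    obtain ⟨b, hb⟩ : (S.erase a).Nonempty := card_pos.1 (by rw [card_erase_of_mem ha]; omega)
    obtain ⟨σ, hσ⟩ := ih (S := (S.erase a).erase b)
      (by rw [card_erase_of_mem hb, card_erase_of_mem ha]; omega)
    have := hσ.insert_insert (a := a) (b := b) (by simp) (by simp) (ne_of_mem_erase hb).symm
    rw [insert_erase hb, insert_erase ha] at this
    exact ⟨_, this⟩

lemma conj_swap (hσ : IsPairing S σ) {b c : V} (hb : b ∈ S) (hc : c ∈ S) :
    IsPairing S fun v => Equiv.swap b c (σ (Equiv.swap b c v)) := by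
  have hswap : ∀ v ∈ S, Equiv.swap b c v ∈ S := fun v hv => by
    rw [Equiv.swap_apply_def]; split_ifs <;> assumption
  refine ⟨fun v hv => hswap _ (hσ.mem _ (hswap v hv)), fun v hv => ?_, fun v hv => ?_⟩
  · rw [Ne, Equiv.swap_apply_eq_iff]
    exact hσ.ne _ (hswap v hv)
  · simp only [Equiv.swap_apply_self, hσ.apply_apply _ (hswap v hv)]

/-- Conjugating `σ` by the transposition of `σ a` and `c` re-pairs `a` with `c` and `σ a` with
`σ c`, and leaves the other pairs alone. -/
lemma pairingCost_conj_swap (G : SimpleGraph V) (hσ : IsPairing S σ) {a c : V} (ha : a ∈ S)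
    (hc : c ∈ S) (hca : c ≠ a) (hcσa : c ≠ σ a) :
    pairingCost G S (fun v => Equiv.swap (σ a) c (σ (Equiv.swap (σ a) c v))) +
        2 * (G.dist a (σ a) + G.dist c (σ c)) =
      pairingCost G S σ + 2 * (G.dist a c + G.dist (σ a) (σ c)) := by
  have hσb : σ (σ a) = a := hσ.apply_apply a ha
  have hσd : σ (σ c) = c := hσ.apply_apply c hc
  have hbS : σ a ∈ S := hσ.mem a ha
  have hdS : σ c ∈ S := hσ.mem c hc
  have hba : σ a ≠ a := hσ.ne a ha
  have hdc : σ c ≠ c := hσ.ne c hc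
  have hda : σ c ≠ a := fun h => hcσa (by rw [← h, hσd])
  have hdb : σ c ≠ σ a := fun h => hca (by rw [← hσd, h, hσb])
  generalize hb : σ a = b at *
  generalize hd : σ c = d at *
  set τ := fun v => Equiv.swap b c (σ (Equiv.swap b c v))
  set Q : Finset V := {a, b, c, d}
  have hQS : Q ⊆ S := by
    simp [Q, insert_subset_iff, ha, hc, hbS, hdS]
  have hτ : ∀ v ∈ S \ Q, G.dist v (τ v) = G.dist v (σ v) := by
    intro v hv
    simp only [Q, mem_sdiff, mem_insert, mem_singleton, not_or] at hv
    obtain ⟨hvS, hva, hvb, hvc, hvd⟩ := hv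
    have hσvb : σ v ≠ b := fun h => hva (by rw [← hσ.apply_apply v hvS, h, hσb])
    have hσvc : σ v ≠ c := fun h => hvd (by rw [← hσ.apply_apply v hvS, h, hd])
    simp only [τ, Equiv.swap_apply_of_ne_of_ne hvb hvc, Equiv.swap_apply_of_ne_of_ne hσvb hσvc]
  have hsplit : ∀ f : V → V, pairingCost G S f =
      ∑ v ∈ S \ Q, G.dist v (f v) + ∑ v ∈ Q, G.dist v (f v) := fun f =>
    (sum_sdiff hQS).symm
  have hQσ : ∑ v ∈ Q, G.dist v (σ v) = 2 * (G.dist a b + G.dist c d) := by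
    simp [Q, sum_insert, hba.symm, hca.symm, hcσa.symm, hda.symm, hdb.symm, hdc.symm, hσb, hσd,
      hb, hd, G.dist_comm (u := b), G.dist_comm (u := d)]
    ring
  have hQτ : ∑ v ∈ Q, G.dist v (τ v) = 2 * (G.dist a c + G.dist b d) := by
    simp [Q, τ, sum_insert, hba.symm, hca.symm, hcσa.symm, hda.symm, hdb.symm, hdc.symm, hσb, hσd,
      hb, hd, hdb, hdc, Equiv.swap_apply_of_ne_of_ne, G.dist_comm (u := c), G.dist_comm (u := d)]
    ring
  rw [hsplit, hsplit σ, sum_congr rfl hτ, hQσ, hQτ]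
  ring

lemma exists_finset (hσ : IsPairing S σ) :
    ∃ M : Finset (V × V), (∀ p ∈ M, p.1 ∈ S ∧ p.2 = σ p.1) ∧
      ∀ v ∈ S, ∃! p, p ∈ M ∧ (v = p.1 ∨ v = p.2) := by
  classical
  -- list each pair `{w, σ w}` once, as `(w, σ w)` with `w` first for an arbitrary well-order
  let r : V → V → Prop := WellOrderingRel
  have hr : ∀ {w w'}, r w w' → ¬r w' w := fun h => asymm h
  have hsame : ∀ v w w', w ∈ S → w' ∈ S → r w (σ w) → r w' (σ w') → (v = w ∨ v = σ w) →
      (v = w' ∨ v = σ w') → w = w' := by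
    intro v w w' hw hw' hrw hrw' hv hv'
    have := hσ.apply_apply w hw
    have := hσ.apply_apply w' hw'
    rcases hv with rfl | rfl <;> rcases hv' with h | h <;> grind
  refine ⟨(S.filter fun v => r v (σ v)).image fun v => (v, σ v), ?_, fun v hv => ?_⟩
  · intro p hp
    obtain ⟨w, hw, rfl⟩ := mem_image.1 hp
    exact ⟨(mem_filter.1 hw).1, rfl⟩
  · obtain ⟨w, hwS, hrw, hvw⟩ : ∃ w ∈ S, r w (σ w) ∧ (v = w ∨ v = σ w) := by
      rcases trichotomous_of r v (σ v) with h | h | h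
      · exact ⟨v, hv, h, Or.inl rfl⟩
      · exact absurd h.symm (hσ.ne v hv)
      · exact ⟨σ v, hσ.mem v hv, by rwa [hσ.apply_apply v hv], Or.inr (hσ.apply_apply v hv).symm⟩
    refine ⟨(w, σ w), ⟨mem_image_of_mem _ (mem_filter.2 ⟨hwS, hrw⟩), hvw⟩, ?_⟩
    rintro p ⟨hp, hvp⟩
    obtain ⟨w', hw', rfl⟩ := mem_image.1 hp
    rw [hsame v w' w (mem_filter.1 hw').1 hwS (mem_filter.1 hw').2 hrw hvp hvw]

lemma exists_pairingCost_lt {T : SimpleGraph V} (hT : T.IsTree) (hσ : IsPairing S σ) {a c : V}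
    (ha : a ∈ S) (hc : c ∈ S) (hca : c ≠ a) (hcσa : c ≠ σ a)
    (hcross : ¬Disjoint (treePath hT a (σ a)).edges.toFinset
      (treePath hT c (σ c)).edges.toFinset) :
    ∃ τ, IsPairing S τ ∧ pairingCost T S τ < pairingCost T S σ := by
  obtain ⟨e, he₁, he₂⟩ := not_disjoint_iff.1 hcross
  rw [List.mem_toFinset] at he₁ he₂
  have hσc : σ (σ c) = c := hσ.apply_apply c hc
  rcases hT.connected.dist_add_dist_lt_of_mem_edges (treePath_length hT _ _)
    (treePath_length hT _ _) he₁ he₂ with hlt | hlt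
  · have := hσ.pairingCost_conj_swap T ha hc hca hcσa
    exact ⟨_, hσ.conj_swap (hσ.mem a ha) hc, by omega⟩
  · have := hσ.pairingCost_conj_swap T ha (hσ.mem c hc) (fun h => hcσa (by rw [← h, hσc]))
      (fun h => hca (by rw [← hσc, h, hσ.apply_apply a ha]))
    rw [hσc, T.dist_comm (u := σ c)] at this
    exact ⟨_, hσ.conj_swap (hσ.mem a ha) (hσ.mem c hc), by omega⟩

end IsPairing

end

theorem tree_pairing_general {V : Type*} [DecidableEq V] {T : SimpleGraph V}
    (hT : T.IsTree) (S : Finset V) (hS : Even S.card) :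
    ∃ M : Finset (V × V),
      (∀ p ∈ M, p.1 ∈ S ∧ p.2 ∈ S ∧ p.1 ≠ p.2) ∧
      (∀ v ∈ S, ∃! p : V × V, p ∈ M ∧ (v = p.1 ∨ v = p.2)) ∧
      (∀ p ∈ M, ∀ q ∈ M, p ≠ q →
        Disjoint (treePath hT p.1 p.2).edges.toFinset
          (treePath hT q.1 q.2).edges.toFinset) := by
  obtain ⟨σ, hσ, hmin⟩ := (measure (pairingCost T S)).wf.has_min {σ | IsPairing S σ}
    (IsPairing.exists_of_even hS)
  obtain ⟨M, hMσ, hMuniq⟩ := hσ.exists_finset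
  refine ⟨M, fun p hp => ?_, hMuniq, fun p hp q hq hpq => ?_⟩
  · obtain ⟨h₁, h₂⟩ := hMσ p hp
    exact ⟨h₁, h₂ ▸ hσ.mem _ h₁, h₂ ▸ (hσ.ne _ h₁).symm⟩
  obtain ⟨ha, hpσ⟩ := hMσ p hp
  obtain ⟨hc, hqσ⟩ := hMσ q hq
  have hsep : ∀ v ∈ S, (v = p.1 ∨ v = p.2) → ¬(v = q.1 ∨ v = q.2) := fun v hv h₁ h₂ =>
    hpq ((hMuniq v hv).unique ⟨hp, h₁⟩ ⟨hq, h₂⟩)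
  rw [hpσ, hqσ]
  by_contra hcross
  obtain ⟨τ, hτ, hlt⟩ := hσ.exists_pairingCost_lt hT ha hc
    (fun h => hsep _ ha (Or.inl rfl) (Or.inl h.symm))
    (fun h => hsep _ hc (Or.inr (h.trans hpσ.symm)) (Or.inl rfl)) hcross
  exact hmin τ hτ hlt

/-- Tree pairing lemma (Klein–Ravi): given a finite tree `T` and an even subset `S` of
its vertices, `S` can be partitioned into pairs such that the unique paths in `T`
between the two vertices of each pair are pairwise edge-disjoint. -/
theorem tree_pairing {V : Type*} [Fintype V] [DecidableEq V] {T : SimpleGraph V}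
    (hT : T.IsTree) (S : Finset V) (hS : Even S.card) :
    ∃ M : Finset (V × V),
      (∀ p ∈ M, p.1 ∈ S ∧ p.2 ∈ S ∧ p.1 ≠ p.2) ∧
      (∀ v ∈ S, ∃! p : V × V, p ∈ M ∧ (v = p.1 ∨ v = p.2)) ∧
      (∀ p ∈ M, ∀ q ∈ M, p ≠ q →
        Disjoint (treePath hT p.1 p.2).edges.toFinset
          (treePath hT q.1 q.2).edges.toFinset) :=
  tree_pairing_general hT S hS
end

section
/- For i ∈ ℕ define the sequence a^i of length 2^i by a^0 = (1) and, for 1 ≤ k ≤ 2^i, a^{i+1}(2k−1) = a^i(k) and a^{i+1}(2k) = 2^i + k; each a^i is a permutation of {1,…,2^i}. For positions j ∈ {1,…,2^i} set τ(j) = 2^{a^i(j)−1}, and let r be the position with τ(r) = 1 (namely r = 1). Then the minimum, over all functions parent : {j : τ(j) > 1} → {1,…,2^i} satisfying τ(parent(j)) < τ(j) for all j, of Σ_{j : τ(j) > 1} |j − parent(j)|, equals i·2^{i−1}. (In particular, on the unit-weight path graph on positions 1,…,2^i, whose total edge weight is 2^i − 1, every turnover-time-non-decreasing arborescence costs at least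 (i/2) times the weight of the path.) -/
open scoped BigOperators

/-- The sequences `a^i` (1-indexed): `a^0 = (1)`, and `a^{i+1}` alternates elements of
`a^i` (at odd positions `2k-1`) with the elements `2^i + k` (at even positions `2k`).
So `aseq i j` is the `j`-th entry of `a^i` for `1 ≤ j ≤ 2^i`. -/
def aseq : ℕ → ℕ → ℕ
  | 0, _ => 1
  | i + 1, j => if j % 2 = 1 then aseq i ((j + 1) / 2) else 2 ^ i + j / 2

/-!
Split the positions of `a^{i+1}` into even positions `2k`, carrying the values `2^i + k`, and odd
positions `2k - 1`, carrying a copy of `a^i`. A parent of an even position `2k` is another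
position, so it costs at least `1`; these `2^i` positions cost exactly `1` when the parent is
`2k - 1`. An odd position carries a value `≤ 2^i`, so its parent must be odd as well: the odd
positions form a copy of the problem for `a^i`, stretched by a factor `2`. Hence the optimal
cost `c i` satisfies `c (i + 1) = 2^i + 2 c i`, `c 0 = 0`, i.e. `c i = i 2^{i-1}`.
-/

open Finset

lemma Finset.Icc_two_two_mul (n : ℕ) :
    Icc 2 (2 * n) = (Icc 1 n).image (2 * ·) ∪ (Icc 2 n).image (fun k => 2 * k - 1) := by
  ext j
  simp only [mem_union, mem_image, mem_Icc]
  constructor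
  · intro h
    rcases Nat.even_or_odd' j with ⟨k, rfl | rfl⟩
    · exact Or.inl ⟨k, by omega, rfl⟩
    · exact Or.inr ⟨k + 1, by omega, by omega⟩
  · rintro (⟨k, hk, rfl⟩ | ⟨k, hk, rfl⟩) <;> omega

lemma Finset.sum_Icc_two_two_mul {β : Type*} [AddCommMonoid β] (n : ℕ) (f : ℕ → β) :
    ∑ j ∈ Icc 2 (2 * n), f j
      = ∑ k ∈ Icc 1 n, f (2 * k) + ∑ k ∈ Icc 2 n, f (2 * k - 1) := by
  have hdisj : Disjoint ((Icc 1 n).image (2 * ·)) ((Icc 2 n).image (fun k => 2 * k - 1)) := by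
    simp only [disjoint_left, mem_image, mem_Icc]
    omega
  rw [Icc_two_two_mul, sum_union hdisj, sum_image (by intro x _ y _ h; simpa using h),
    sum_image (by intro x hx y hy h; simp only [coe_Icc, Set.mem_Icc] at hx hy h; omega)]

lemma Finset.forall_mem_Icc_two_two_mul (n : ℕ) (P : ℕ → Prop) :
    (∀ j ∈ Icc 2 (2 * n), P j) ↔ (∀ k ∈ Icc 1 n, P (2 * k)) ∧ ∀ k ∈ Icc 2 n, P (2 * k - 1) := by
  rw [Icc_two_two_mul, forall_mem_union, forall_mem_image, forall_mem_image]

lemma Nat.dist_two_mul_sub_one {k m : ℕ} (hk : 1 ≤ k) (hm : 1 ≤ m) :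
    Nat.dist (2 * k - 1) (2 * m - 1) = 2 * Nat.dist k m := by
  rw [← Nat.dist_mul_left]
  unfold Nat.dist
  omega

lemma aseq_succ_two_mul (i k : ℕ) : aseq (i + 1) (2 * k) = 2 ^ i + k := by
  simp [aseq]

lemma aseq_succ_two_mul_sub_one (i : ℕ) {k : ℕ} (hk : 1 ≤ k) :
    aseq (i + 1) (2 * k - 1) = aseq i k := by
  rw [aseq, if_pos (by omega), show (2 * k - 1 + 1) / 2 = k by omega]

lemma aseq_one (i : ℕ) : aseq i 1 = 1 := by
  induction i with
  | zero => rfl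
  | succ i ih => simpa [aseq] using ih

lemma aseq_mem_Icc {i j : ℕ} (hj : j ∈ Icc 1 (2 ^ i)) : aseq i j ∈ Icc 1 (2 ^ i) := by
  induction i generalizing j with
  | zero => simp [aseq]
  | succ i ih =>
    simp only [mem_Icc, pow_succ] at hj ih ⊢
    have := Nat.one_le_two_pow (n := i)
    unfold aseq
    split_ifs
    · have := ih (j := (j + 1) / 2) (by omega)
      omega
    · omega

lemma aseq_eq_one_iff {i j : ℕ} (hj : j ∈ Icc 1 (2 ^ i)) : aseq i j = 1 ↔ j = 1 := by
  refine ⟨fun h => ?_, fun h => h ▸ aseq_one i⟩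
  induction i generalizing j with
  | zero => simpa using hj
  | succ i ih =>
    simp only [mem_Icc, pow_succ] at hj ih
    have := Nat.one_le_two_pow (n := i)
    unfold aseq at h
    split_ifs at h
    · have := ih (j := (j + 1) / 2) (by omega) h
      omega
    · omega

lemma exists_aseq_eq (i : ℕ) {v : ℕ} (hv : v ∈ Icc 1 (2 ^ i)) : ∃ j ∈ Icc 1 (2 ^ i), aseq i j = v := by
  induction i generalizing v with
  | zero => exact ⟨1, by simp, by simpa [aseq, eq_comm] using hv⟩
  | succ i ih =>
    simp only [mem_Icc, pow_succ] at hv ih ⊢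
    by_cases hlow : v ≤ 2 ^ i
    · obtain ⟨k, hk, rfl⟩ := ih ⟨hv.1, hlow⟩
      exact ⟨2 * k - 1, by omega, aseq_succ_two_mul_sub_one i hk.1⟩
    · exact ⟨2 * (v - 2 ^ i), by omega, by rw [aseq_succ_two_mul]; omega⟩

lemma image_aseq_Icc (i : ℕ) : (Icc 1 (2 ^ i)).image (aseq i) = Icc 1 (2 ^ i) := by
  refine Subset.antisymm (fun v hv => ?_) (fun v hv => ?_)
  · obtain ⟨j, hj, rfl⟩ := mem_image.mp hv
    exact aseq_mem_Icc hj
  · obtain ⟨j, hj, hv⟩ := exists_aseq_eq i hv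
    exact mem_image.mpr ⟨j, hj, hv⟩

lemma one_lt_two_pow_aseq_sub_one_iff {i j : ℕ} (hj : j ∈ Icc 1 (2 ^ i)) :
    1 < 2 ^ (aseq i j - 1) ↔ 2 ≤ j := by
  have hval := mem_Icc.mp (aseq_mem_Icc hj)
  have hone := aseq_eq_one_iff hj
  rw [Nat.one_lt_two_pow_iff]
  rw [mem_Icc] at hj
  omega

lemma filter_one_lt_two_pow_aseq_sub_one (i : ℕ) :
    (Icc 1 (2 ^ i)).filter (fun j => 1 < 2 ^ (aseq i j - 1)) = Icc 2 (2 ^ i) := by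
  ext j
  by_cases hj : j ∈ Icc 1 (2 ^ i)
  · rw [mem_filter, one_lt_two_pow_aseq_sub_one_iff hj]
    simp only [mem_Icc] at hj ⊢
    omega
  · simp only [mem_filter, mem_Icc] at hj ⊢
    omega

/-- The paper's condition `τ(p j) < τ(j)`, with `τ = 2^(a^i - 1)` replaced by the order-equivalent
`a^i`; the non-root positions are `2, …, 2^i`. -/
def IsDecreasingParent (i : ℕ) (p : ℕ → ℕ) : Prop :=
  ∀ j ∈ Icc 2 (2 ^ i), p j ∈ Icc 1 (2 ^ i) ∧ aseq i (p j) < aseq i j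

def treeCost (i : ℕ) (p : ℕ → ℕ) : ℕ :=
  ∑ j ∈ Icc 2 (2 ^ i), Nat.dist j (p j)

lemma isDecreasingParent_iff_turnover {i : ℕ} {p : ℕ → ℕ} :
    (∀ j ∈ Icc 1 (2 ^ i), 1 < 2 ^ (aseq i j - 1) →
        p j ∈ Icc 1 (2 ^ i) ∧ (2 : ℕ) ^ (aseq i (p j) - 1) < 2 ^ (aseq i j - 1)) ↔
      IsDecreasingParent i p := by
  have hpow {a b : ℕ} (ha : 1 ≤ a) (hb : 1 ≤ b) : (2 : ℕ) ^ (a - 1) < 2 ^ (b - 1) ↔ a < b := by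
    rw [Nat.pow_lt_pow_iff_right one_lt_two]
    omega
  refine forall_congr' fun j => ⟨fun h hj => ?_, fun h hj hτ => ?_⟩
  · have hj' : j ∈ Icc 1 (2 ^ i) := by simp only [mem_Icc] at hj ⊢; omega
    obtain ⟨hmem, hlt⟩ := h hj' ((one_lt_two_pow_aseq_sub_one_iff hj').mpr (mem_Icc.mp hj).1)
    exact ⟨hmem, (hpow (mem_Icc.mp (aseq_mem_Icc hmem)).1 (mem_Icc.mp (aseq_mem_Icc hj')).1).mp hlt⟩
  · have hj2 : j ∈ Icc 2 (2 ^ i) := by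
      simp only [mem_Icc] at hj ⊢
      exact ⟨(one_lt_two_pow_aseq_sub_one_iff (mem_Icc.mpr hj)).mp hτ, hj.2⟩
    obtain ⟨hmem, hlt⟩ := h hj2
    exact ⟨hmem, (hpow (mem_Icc.mp (aseq_mem_Icc hmem)).1 (mem_Icc.mp (aseq_mem_Icc hj)).1).mpr hlt⟩

lemma treeCost_succ (i : ℕ) (p : ℕ → ℕ) :
    treeCost (i + 1) p = ∑ k ∈ Icc 1 (2 ^ i), Nat.dist (2 * k) (p (2 * k))
      + ∑ k ∈ Icc 2 (2 ^ i), Nat.dist (2 * k - 1) (p (2 * k - 1)) := by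
  rw [treeCost, pow_succ', sum_Icc_two_two_mul]

def liftParent (p : ℕ → ℕ) (j : ℕ) : ℕ :=
  if j % 2 = 0 then j - 1 else 2 * p ((j + 1) / 2) - 1

lemma liftParent_two_mul (p : ℕ → ℕ) (k : ℕ) : liftParent p (2 * k) = 2 * k - 1 := by
  simp [liftParent]

lemma liftParent_two_mul_sub_one (p : ℕ → ℕ) {k : ℕ} (hk : 1 ≤ k) :
    liftParent p (2 * k - 1) = 2 * p k - 1 := by
  rw [liftParent, if_neg (by omega), show (2 * k - 1 + 1) / 2 = k by omega]

lemma IsDecreasingParent.liftParent {i : ℕ} {p : ℕ → ℕ} (hp : IsDecreasingParent i p) :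
    IsDecreasingParent (i + 1) (liftParent p) := by
  rw [IsDecreasingParent, pow_succ', forall_mem_Icc_two_two_mul]
  constructor
  · intro k hk
    have hval := mem_Icc.mp (aseq_mem_Icc hk)
    rw [mem_Icc] at hk
    rw [liftParent_two_mul, aseq_succ_two_mul, aseq_succ_two_mul_sub_one i hk.1, mem_Icc]
    omega
  · intro k hk
    obtain ⟨hmem, hlt⟩ := hp k hk
    rw [mem_Icc] at hk hmem
    rw [liftParent_two_mul_sub_one p (by omega), aseq_succ_two_mul_sub_one i hmem.1,
      aseq_succ_two_mul_sub_one i (by omega), mem_Icc]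
    exact ⟨by omega, hlt⟩

lemma treeCost_liftParent {i : ℕ} {p : ℕ → ℕ} (hp : IsDecreasingParent i p) :
    treeCost (i + 1) (liftParent p) = 2 ^ i + 2 * treeCost i p := by
  rw [treeCost_succ, treeCost, mul_sum]
  congr 1
  · rw [sum_congr rfl (g := fun _ => 1), sum_const, Nat.card_Icc, smul_eq_mul, mul_one,
      Nat.add_sub_cancel]
    intro k hk
    rw [liftParent_two_mul, Nat.dist_comm]
    unfold Nat.dist
    rw [mem_Icc] at hk
    omega
  · refine sum_congr rfl fun k hk => ?_
    have hmem := mem_Icc.mp (hp k hk).1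
    rw [liftParent_two_mul_sub_one p (by simp only [mem_Icc] at hk; omega),
      Nat.dist_two_mul_sub_one (by simp only [mem_Icc] at hk; omega) hmem.1]

def restrictParent (q : ℕ → ℕ) (k : ℕ) : ℕ :=
  (q (2 * k - 1) + 1) / 2

/-- Even positions carry the entries above `2^i`, so they cannot be parents of odd positions. -/
lemma IsDecreasingParent.eq_two_mul_restrictParent_sub_one {i : ℕ} {q : ℕ → ℕ}
    (hq : IsDecreasingParent (i + 1) q) {k : ℕ} (hk : k ∈ Icc 2 (2 ^ i)) :
    q (2 * k - 1) = 2 * restrictParent q k - 1 ∧ restrictParent q k ∈ Icc 1 (2 ^ i) := by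
  obtain ⟨hmem, hlt⟩ := hq (2 * k - 1) (by simp only [mem_Icc, pow_succ] at hk ⊢; omega)
  rw [mem_Icc] at hk
  rw [aseq_succ_two_mul_sub_one i (by omega)] at hlt
  have hval := mem_Icc.mp (aseq_mem_Icc (i := i) (j := k) (mem_Icc.mpr ⟨by omega, hk.2⟩))
  have hodd : q (2 * k - 1) % 2 = 1 := by
    by_contra heven
    rw [show q (2 * k - 1) = 2 * (q (2 * k - 1) / 2) by omega, aseq_succ_two_mul] at hlt
    omega
  rw [mem_Icc, pow_succ] at hmem
  unfold restrictParent
  exact ⟨by omega, mem_Icc.mpr ⟨by omega, by omega⟩⟩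

lemma IsDecreasingParent.restrictParent {i : ℕ} {q : ℕ → ℕ} (hq : IsDecreasingParent (i + 1) q) :
    IsDecreasingParent i (restrictParent q) := by
  intro k hk
  obtain ⟨hq_eq, hmem⟩ := hq.eq_two_mul_restrictParent_sub_one hk
  obtain ⟨-, hlt⟩ := hq (2 * k - 1) (by simp only [mem_Icc, pow_succ] at hk ⊢; omega)
  rw [hq_eq, aseq_succ_two_mul_sub_one i (mem_Icc.mp hmem).1,
    aseq_succ_two_mul_sub_one i (by simp only [mem_Icc] at hk; omega)] at hlt
  exact ⟨hmem, hlt⟩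

lemma le_treeCost_succ {i : ℕ} {q : ℕ → ℕ} (hq : IsDecreasingParent (i + 1) q) :
    2 ^ i + 2 * treeCost i (restrictParent q) ≤ treeCost (i + 1) q := by
  rw [treeCost_succ, treeCost, mul_sum]
  refine add_le_add ?_ (le_of_eq (sum_congr rfl fun k hk => ?_))
  · calc 2 ^ i = ∑ _k ∈ Icc 1 (2 ^ i), 1 := by simp
      _ ≤ _ := sum_le_sum fun k hk => Nat.dist_pos_of_ne fun h => ?_
    obtain ⟨-, hlt⟩ := hq (2 * k) (by simp only [mem_Icc, pow_succ] at hk ⊢; omega)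
    exact hlt.ne (congrArg (aseq (i + 1)) h).symm
  · obtain ⟨hq_eq, hmem⟩ := hq.eq_two_mul_restrictParent_sub_one hk
    rw [hq_eq, Nat.dist_two_mul_sub_one (by simp only [mem_Icc] at hk; omega) (mem_Icc.mp hmem).1]

lemma succ_mul_two_pow_eq (i : ℕ) : (i + 1) * 2 ^ (i + 1 - 1) = 2 ^ i + 2 * (i * 2 ^ (i - 1)) := by
  rcases i with _ | i
  · simp
  · simp only [Nat.add_sub_cancel, pow_succ]
    ring

lemma exists_isDecreasingParent_treeCost_eq (i : ℕ) :
    ∃ p, IsDecreasingParent i p ∧ treeCost i p = i * 2 ^ (i - 1) := by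
  induction i with
  | zero => exact ⟨id, by simp [IsDecreasingParent], by simp [treeCost]⟩
  | succ i ih =>
    obtain ⟨p, hp, hcost⟩ := ih
    refine ⟨liftParent p, hp.liftParent, ?_⟩
    rw [treeCost_liftParent hp, hcost, succ_mul_two_pow_eq]

lemma le_treeCost {i : ℕ} {p : ℕ → ℕ} (hp : IsDecreasingParent i p) :
    i * 2 ^ (i - 1) ≤ treeCost i p := by
  induction i generalizing p with
  | zero => simp
  | succ i ih =>
    calc (i + 1) * 2 ^ (i + 1 - 1) = 2 ^ i + 2 * (i * 2 ^ (i - 1)) := succ_mul_two_pow_eq i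
      _ ≤ 2 ^ i + 2 * treeCost i (restrictParent p) := by gcongr; exact ih hp.restrictParent
      _ ≤ treeCost (i + 1) p := le_treeCost_succ hp

/-- Each `a^i` is a permutation of `{1, …, 2^i}`, and for the turnover times
`τ(j) = 2^{a^i(j) - 1}` on the unit-weight path graph on positions `1, …, 2^i`, the
minimum over all parent functions with strictly smaller turnover time at the parent
(`τ(parent j) < τ(j)` for every non-root `j`) of the total cost
`∑_{j : τ(j) > 1} |j - parent j|` equals `i·2^{i-1}`. -/
theorem aseq_decreasing_tree_cost (i : ℕ) :
    (Finset.image (aseq i) (Finset.Icc 1 (2 ^ i)) = Finset.Icc 1 (2 ^ i)) ∧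
    IsLeast
      {c : ℕ | ∃ parent : ℕ → ℕ,
        (∀ j ∈ Finset.Icc 1 (2 ^ i), 1 < 2 ^ (aseq i j - 1) →
          parent j ∈ Finset.Icc 1 (2 ^ i) ∧
            (2 : ℕ) ^ (aseq i (parent j) - 1) < 2 ^ (aseq i j - 1)) ∧
        c = ∑ j ∈ (Finset.Icc 1 (2 ^ i)).filter (fun j => 1 < 2 ^ (aseq i j - 1)),
              Nat.dist j (parent j)}
      (i * 2 ^ (i - 1)) := by
  rw [filter_one_lt_two_pow_aseq_sub_one]
  refine ⟨image_aseq_Icc i, ?_, ?_⟩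
  · obtain ⟨p, hp, hcost⟩ := exists_isDecreasingParent_treeCost_eq i
    exact ⟨p, isDecreasingParent_iff_turnover.mpr hp, hcost.symm⟩
  · rintro c ⟨p, hp, rfl⟩
    exact le_treeCost (isDecreasingParent_iff_turnover.mp hp)
end
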